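/- arXiv:1412.4076 — 4 statements merged into one kernel-verified Lean document; each statement's English description precedes it below -/
import Mathlib

section
/- Let T1 and T2 be rooted binary phylogenetic trees on the same taxon set X, and let f be an optimal character for d_MP(T1,T2) with l_f(T1) < l_f(T2). Then there exists an optimal character f' such that l_{f'}(T1) < l_{f'}(T2) and, for every internal vertex u of T1 both of whose children are leaves (i.e. the children form a cherry), f' assigns both children of u the same state. -/
namespace MPDist

/-- A rooted binary phylogenetic tree: leaves are labelled by taxa,
every internal vertex (including the root) has exactly two children. -/
inductive PTree (X : Type) : Type
  | leaf : X → PTree X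
  | node : PTree X → PTree X → PTree X

namespace PTree

/-- The list of leaf labels (taxa) of a tree. -/
def leaves {X : Type} : PTree X → List X
  | .leaf x => [x]
  | .node l r => l.leaves ++ r.leaves

/-- Relabelling of taxa. -/
def map {X Y : Type} (φ : X → Y) : PTree X → PTree Y
  | .leaf x => .leaf (φ x)
  | .node l r => .node (l.map φ) (r.map φ)

end PTree

/-- `T` is a phylogenetic tree on the taxon set `X`:
its leaves are bijectively labelled by the elements of `X`. -/
def IsPhylo {X : Type} (T : PTree X) : Prop :=
  T.leaves.Nodup ∧ ∀ x : X, x ∈ T.leaves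

/-- A state-labelled binary tree (an extension assigns a state to every vertex). -/
inductive ETree (C : Type) : Type
  | leaf : C → ETree C
  | node : C → ETree C → ETree C → ETree C

namespace ETree

/-- The state at the root. -/
def root {C : Type} : ETree C → C
  | .leaf c => c
  | .node c _ _ => c

/-- The number of edges `{u,v}` with different states at the two endpoints
(substitutions/mutations). -/
def changes {C : Type} [DecidableEq C] : ETree C → ℕ
  | .leaf _ => 0
  | .node c l r =>
      ((if l.root = c then 0 else 1) + (if r.root = c then 0 else 1)) +
        (l.changes + r.changes)

end ETree

/-- `g` is an extension of the character `f` to the tree `T`: it has the same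
shape as `T`, assigns a state to every vertex, and agrees with `f` on the taxa. -/
inductive IsExtension {X C : Type} (f : X → C) : PTree X → ETree C → Prop
  | leaf (x : X) : IsExtension f (.leaf x) (.leaf (f x))
  | node {l r : PTree X} {gl gr : ETree C} (c : C) :
      IsExtension f l gl → IsExtension f r gr →
      IsExtension f (.node l r) (.node c gl gr)

/-- The parsimony score `l_f(T)`: the minimum number of mutation edges
over all extensions of `f` to `T`. -/
noncomputable def pscore {X C : Type} [DecidableEq C] (f : X → C) (T : PTree X) : ℕ :=
  sInf { k : ℕ | ∃ g : ETree C, IsExtension f T g ∧ g.changes = k }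

/-- The MP distance `d_MP(T1,T2) = max_f |l_f(T1) − l_f(T2)|`, the maximum taken
over all characters `f` on the taxon set (states drawn from `ℕ`). -/
noncomputable def dMP {X : Type} (T1 T2 : PTree X) : ℕ :=
  sSup { k : ℕ | ∃ f : X → ℕ, k = ((pscore f T1 : ℤ) - (pscore f T2 : ℤ)).natAbs }

/-- `d^i_MP(T1,T2)`: as `dMP`, but over characters using at most `i` states. -/
noncomputable def dMPk {X : Type} (i : ℕ) (T1 T2 : PTree X) : ℕ :=
  sSup { k : ℕ | ∃ f : X → Fin i, k = ((pscore f T1 : ℤ) - (pscore f T2 : ℤ)).natAbs }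

/-- `max_f (l_f(T2) − l_f(T1))` over all characters `f`. -/
noncomputable def maxDiff {X : Type} (T1 T2 : PTree X) : ℤ :=
  sSup { d : ℤ | ∃ f : X → ℕ, d = (pscore f T2 : ℤ) - (pscore f T1 : ℤ) }

/-- `max_f (l_f(T2) − l_f(T1))` over all characters `f` with at most `i` states. -/
noncomputable def maxDiffk {X : Type} (i : ℕ) (T1 T2 : PTree X) : ℤ :=
  sSup { d : ℤ | ∃ f : X → Fin i, d = (pscore f T2 : ℤ) - (pscore f T1 : ℤ) }

/-- `gap(T1,T2) = |max_f(l_f(T2)−l_f(T1)) − max_f(l_f(T1)−l_f(T2))|`. -/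
noncomputable def gap {X : Type} (T1 T2 : PTree X) : ℤ :=
  |maxDiff T1 T2 - maxDiff T2 T1|

/-- `gap` restricted to characters with at most `i` states. -/
noncomputable def gapk {X : Type} (i : ℕ) (T1 T2 : PTree X) : ℤ :=
  |maxDiffk i T1 T2 - maxDiffk i T2 T1|

/-- `s` occurs as a (rooted) subtree of `t`. -/
inductive IsSubtree {X : Type} : PTree X → PTree X → Prop
  | refl (t : PTree X) : IsSubtree t t
  | left {s l r : PTree X} : IsSubtree s l → IsSubtree s (.node l r)
  | right {s l r : PTree X} : IsSubtree s r → IsSubtree s (.node l r)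

/-- Taxa `a`, `b` form a cherry of `T`: they are leaves with a common parent. -/
def IsCherry {X : Type} (T : PTree X) (a b : X) : Prop :=
  IsSubtree (.node (.leaf a) (.leaf b)) T

/-- Relabel a tree on taxa `ℕ` by shifting all labels up by `s` (fresh copies). -/
def shiftT (s : ℕ) (T : PTree ℕ) : PTree ℕ := T.map (fun x => x + s)

/-- `T_a = (((((2,3),4),5),6),1)` on taxa `{1,…,6}` (taxon `j` encoded as `j-1`). -/
def Ta6 : PTree ℕ :=
  .node (.node (.node (.node (.node (.leaf 1) (.leaf 2)) (.leaf 3)) (.leaf 4)) (.leaf 5)) (.leaf 0)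

/-- `T_b = ((((2,6),(3,4)),5),1)` on taxa `{1,…,6}` (taxon `j` encoded as `j-1`). -/
def Tb6 : PTree ℕ :=
  .node (.node (.node (.node (.leaf 1) (.leaf 5)) (.node (.leaf 2) (.leaf 3))) (.leaf 4)) (.leaf 0)

/-- `T_A`: two disjoint copies of `T_a` joined under a new root (12 taxa). -/
def TA12 : PTree ℕ := .node Ta6 (shiftT 6 Ta6)

/-- `T_B`: two disjoint copies of `T_b` joined under a new root (12 taxa). -/
def TB12 : PTree ℕ := .node Tb6 (shiftT 6 Tb6)

/-- `TkA k` is the tree `T^{k+1}_A`: `k+1` disjoint copies of `T_A` arranged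
along a caterpillar backbone (so `TkA 0 = T^1_A = T_A`). -/
def TkA : ℕ → PTree ℕ
  | 0 => TA12
  | k+1 => .node (TkA k) (shiftT (12*(k+1)) TA12)

/-- `TkB k` is the tree `T^{k+1}_B`. -/
def TkB : ℕ → PTree ℕ
  | 0 => TB12
  | k+1 => .node (TkB k) (shiftT (12*(k+1)) TB12)

/-- `T_a = (((5,(6,4)),3),((1,(8,2)),7))` on taxa `{1,…,8}` (taxon `j` encoded as `j-1`). -/
def Ta8 : PTree ℕ :=
  .node (.node (.node (.leaf 4) (.node (.leaf 5) (.leaf 3))) (.leaf 2))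
        (.node (.node (.leaf 0) (.node (.leaf 7) (.leaf 1))) (.leaf 6))

/-- `T_b = (((7,((4,2),6)),3),(8,(1,5)))` on taxa `{1,…,8}` (taxon `j` encoded as `j-1`). -/
def Tb8 : PTree ℕ :=
  .node (.node (.node (.leaf 6) (.node (.node (.leaf 3) (.leaf 1)) (.leaf 5))) (.leaf 2))
        (.node (.leaf 7) (.node (.leaf 0) (.leaf 4)))

/-- `T_A` (2-state construction): two disjoint copies of `T_a` under a new root (16 taxa). -/
def TA16 : PTree ℕ := .node Ta8 (shiftT 8 Ta8)

/-- `T_B` (2-state construction): two disjoint copies of `T_b` under a new root (16 taxa). -/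
def TB16 : PTree ℕ := .node Tb8 (shiftT 8 Tb8)

/-- `T_AA`: two disjoint copies of `T_A` under a new root (32 taxa). -/
def TAA : PTree ℕ := .node TA16 (shiftT 16 TA16)

/-- `T_BB`: two disjoint copies of `T_B` under a new root (32 taxa). -/
def TBB : PTree ℕ := .node TB16 (shiftT 16 TB16)

/-- `TkAA k` is the tree `T^{k+1}_AA` (so `TkAA 0 = T^1_AA = T_AA`). -/
def TkAA : ℕ → PTree ℕ
  | 0 => TAA
  | k+1 => .node (TkAA k) (shiftT (32*(k+1)) TAA)

/-- `TkBB k` is the tree `T^{k+1}_BB`. -/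
def TkBB : ℕ → PTree ℕ
  | 0 => TBB
  | k+1 => .node (TkBB k) (shiftT (32*(k+1)) TBB)


/-! If a cherry `{a, b}` of `T1` is bichromatic under `f`, giving both leaves one of the two states
(the one of their parent in a most parsimonious extension, or either if the parent has a third
state) lowers `l_f(T1)` by at least one, while changing the state of a single taxon changes
`l_f(T2)` by at most one. So `l(T2) - l(T1)` does not decrease and the new character is still
optimal; as `l(T1)` strictly decreases, repeating this ends with every cherry monochromatic. -/

open Function

section Parsimony

variable {X C : Type}

theorem ETree.root_node (c : C) (l r : ETree C) : (ETree.node c l r).root = c := rfl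

theorem IsSubtree.leaves_subset {s t : PTree X} (h : IsSubtree s t) : s.leaves ⊆ t.leaves := by
  induction h with
  | refl => exact List.Subset.refl _
  | left _ ih => exact List.Subset.trans ih (List.subset_append_left _ _)
  | right _ ih => exact List.Subset.trans ih (List.subset_append_right _ _)

theorem IsExtension.congr {f f' : X → C} {T : PTree X} {g : ETree C} (hg : IsExtension f T g)
    (h : ∀ x ∈ T.leaves, f x = f' x) : IsExtension f' T g := by
  induction hg with
  | leaf x => exact h x (List.mem_singleton_self x) ▸ .leaf x
  | node c _ _ ihl ihr =>
    exact .node c (ihl fun x hx => h x (List.mem_append_left _ hx))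
      (ihr fun x hx => h x (List.mem_append_right _ hx))

def leftmostExtension (f : X → C) : PTree X → ETree C
  | .leaf x => .leaf (f x)
  | .node l r => .node (leftmostExtension f l).root (leftmostExtension f l) (leftmostExtension f r)

theorem isExtension_leftmostExtension (f : X → C) (T : PTree X) :
    IsExtension f T (leftmostExtension f T) := by
  induction T with
  | leaf x => exact .leaf x
  | node l r ihl ihr => exact .node _ ihl ihr

variable [DecidableEq C]

theorem ite_ne_le_add_ite_ne (x y c : C) :
    (if x = c then 0 else 1) ≤ (if y = c then 0 else 1) + (if x = y then 0 else 1) := by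
  split_ifs <;> simp_all

theorem changes_leftmostExtension_lt (f : X → C) (T : PTree X) :
    (leftmostExtension f T).changes < T.leaves.length := by
  induction T with
  | leaf x => simp [leftmostExtension, ETree.changes, PTree.leaves]
  | node l r ihl ihr =>
    simp only [leftmostExtension, ETree.changes, PTree.leaves, List.length_append, ↓reduceIte]
    split_ifs <;> omega

theorem pscore_le_changes {f : X → C} {T : PTree X} {g : ETree C} (hg : IsExtension f T g) :
    pscore f T ≤ g.changes :=
  Nat.sInf_le ⟨g, hg, rfl⟩

theorem exists_isExtension_changes_eq_pscore (f : X → C) (T : PTree X) :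
    ∃ g, IsExtension f T g ∧ g.changes = pscore f T :=
  Nat.sInf_mem (s := {k | ∃ g : ETree C, IsExtension f T g ∧ g.changes = k})
    ⟨_, _, isExtension_leftmostExtension f T, rfl⟩

theorem pscore_lt_length (f : X → C) (T : PTree X) : pscore f T < T.leaves.length :=
  (pscore_le_changes (isExtension_leftmostExtension f T)).trans_lt
    (changes_leftmostExtension_lt f T)

/- The `if` term charges the edge above the root when the root state changes; it is what makes
this statement, and the cherry lemma below, go through by induction. -/
theorem IsExtension.exists_changes_le_add_countP_ne {f' : X → C} {T : PTree X} {g : ETree C}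
    (hg : IsExtension f' T g) (f : X → C) :
    ∃ g', IsExtension f T g' ∧ g'.changes + (if g'.root = g.root then 0 else 1) ≤
      g.changes + T.leaves.countP (fun x => f x ≠ f' x) := by
  induction hg with
  | leaf x =>
    refine ⟨.leaf (f x), .leaf x, ?_⟩
    by_cases h : f x = f' x <;> simp [h, ETree.changes, ETree.root, PTree.leaves]
  | @node _ _ gl gr c _ _ ihl ihr =>
    obtain ⟨gl', hl', hcl⟩ := ihl
    obtain ⟨gr', hr', hcr⟩ := ihr
    refine ⟨.node c gl' gr', .node c hl' hr', ?_⟩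
    have := ite_ne_le_add_ite_ne gl'.root gl.root c
    have := ite_ne_le_add_ite_ne gr'.root gr.root c
    simp only [ETree.changes, ETree.root_node, PTree.leaves, List.countP_append, ↓reduceIte]
    omega

theorem pscore_le_pscore_add_countP_ne (f f' : X → C) (T : PTree X) :
    pscore f T ≤ pscore f' T + T.leaves.countP (fun x => f x ≠ f' x) := by
  obtain ⟨g, hg, hgc⟩ := exists_isExtension_changes_eq_pscore f' T
  obtain ⟨g', hg', hc⟩ := hg.exists_changes_le_add_countP_ne f
  have := pscore_le_changes hg'
  omega

theorem pscore_le_pscore_update_add_one [DecidableEq X] {T : PTree X} (hnd : T.leaves.Nodup)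
    (f : X → C) (p : X) (c : C) : pscore f T ≤ pscore (update f p c) T + 1 := by
  have hcount : T.leaves.countP (fun x => f x ≠ update f p c x) ≤ 1 := calc
    _ ≤ T.leaves.count p := List.countP_mono_left fun x _ hx => by
        simp only [beq_iff_eq]
        by_contra hxp
        simp [update_of_ne hxp] at hx
    _ ≤ 1 := List.nodup_iff_count_le_one.mp hnd p
  linarith [pscore_le_pscore_add_countP_ne f (update f p c) T]

theorem IsExtension.exists_update_cherry_changes_lt [DecidableEq X] {f : X → C} {a b : X}
    (hab : f a ≠ f b) {T : PTree X} (hT : IsCherry T a b) (hnd : T.leaves.Nodup)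
    {g : ETree C} (hg : IsExtension f T g) :
    ∃ f' ∈ ({update f b (f a), update f a (f b)} : Set (X → C)), ∃ g', IsExtension f' T g' ∧
      g'.changes + (if g'.root = g.root then 0 else 1) < g.changes := by
  have hne : a ≠ b := fun h => hab (h ▸ rfl)
  have hfix : ∀ f' ∈ ({update f b (f a), update f a (f b)} : Set (X → C)),
      ∀ x, x ≠ a → x ≠ b → f x = f' x := by
    rintro f' (rfl | rfl) x hxa hxb <;> simp [hxa, hxb]
  have hmem : a ∈ (PTree.node (.leaf a) (.leaf b)).leaves ∧
      b ∈ (PTree.node (.leaf a) (.leaf b)).leaves := by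
    simp [PTree.leaves]
  induction T generalizing g with
  | leaf x => cases hT
  | node l r ihl ihr =>
    obtain ⟨hndl, hndr, hdisj⟩ := List.nodup_append'.mp hnd
    cases hg with | @node _ _ gl gr d hl hr =>
    cases hT with
    | refl =>
      cases hl; cases hr
      by_cases hd : d = f b
      · refine ⟨_, Or.inr rfl, .node (f b) (.leaf (f b)) (.leaf (f b)), ?_, ?_⟩
        · convert IsExtension.node (f := update f a (f b)) (f b) (.leaf a) (.leaf b) <;>
            simp [hne.symm]
        · simp [ETree.changes, ETree.root, hd, hab]
      · refine ⟨_, Or.inl rfl, .node (f a) (.leaf (f a)) (.leaf (f a)), ?_, ?_⟩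
        · convert IsExtension.node (f := update f b (f a)) (f a) (.leaf a) (.leaf b) <;>
            simp [hne]
        · by_cases had : f a = d <;> simp [ETree.changes, ETree.root, had, Ne.symm hd]
    | left hsub =>
      obtain ⟨f', hf', gl', hl', hlt⟩ := ihl hsub hndl hl
      have hr' : IsExtension f' r gr := hr.congr fun x hx =>
        hfix f' hf' x (fun h => hdisj (hsub.leaves_subset hmem.1) (h ▸ hx))
          (fun h => hdisj (hsub.leaves_subset hmem.2) (h ▸ hx))
      refine ⟨f', hf', .node d gl' gr, .node d hl' hr', ?_⟩
      have := ite_ne_le_add_ite_ne gl'.root gl.root d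
      simp only [ETree.changes, ETree.root_node, ↓reduceIte]
      omega
    | right hsub =>
      obtain ⟨f', hf', gr', hr', hlt⟩ := ihr hsub hndr hr
      have hl' : IsExtension f' l gl := hl.congr fun x hx =>
        hfix f' hf' x (fun h => hdisj (h ▸ hx) (hsub.leaves_subset hmem.1))
          (fun h => hdisj (h ▸ hx) (hsub.leaves_subset hmem.2))
      refine ⟨f', hf', .node d gl gr', .node d hl' hr', ?_⟩
      have := ite_ne_le_add_ite_ne gr'.root gr.root d
      simp only [ETree.changes, ETree.root_node, ↓reduceIte]
      omega

theorem exists_pscore_update_cherry_lt [DecidableEq X] {f : X → C} {a b : X} (hab : f a ≠ f b)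
    {T : PTree X} (hT : IsCherry T a b) (hnd : T.leaves.Nodup) :
    ∃ f' ∈ ({update f b (f a), update f a (f b)} : Set (X → C)), pscore f' T < pscore f T := by
  obtain ⟨g, hg, hgc⟩ := exists_isExtension_changes_eq_pscore f T
  obtain ⟨f', hf', g', hg', hlt⟩ := hg.exists_update_cherry_changes_lt hab hT hnd
  exact ⟨f', hf', by have := pscore_le_changes hg'; omega⟩

end Parsimony

section Distance

variable {X : Type}

theorem natAbs_sub_pscore_le_dMP (T1 T2 : PTree X) (f : X → ℕ) :
    ((pscore f T1 : ℤ) - (pscore f T2 : ℤ)).natAbs ≤ dMP T1 T2 := by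
  refine le_csSup ⟨T1.leaves.length + T2.leaves.length, ?_⟩ ⟨f, rfl⟩
  rintro k ⟨g, rfl⟩
  have := pscore_lt_length g T1
  have := pscore_lt_length g T2
  omega

theorem exists_optimal_update_cherry [DecidableEq X] {T1 T2 : PTree X} (h1 : T1.leaves.Nodup)
    (h2 : T2.leaves.Nodup) {f : X → ℕ}
    (hopt : ((pscore f T1 : ℤ) - (pscore f T2 : ℤ)).natAbs = dMP T1 T2)
    (hlt : pscore f T1 < pscore f T2) {a b : X} (hT : IsCherry T1 a b) (hab : f a ≠ f b) :
    ∃ f' : X → ℕ, ((pscore f' T1 : ℤ) - (pscore f' T2 : ℤ)).natAbs = dMP T1 T2 ∧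
      pscore f' T1 < pscore f' T2 ∧ pscore f' T1 < pscore f T1 := by
  obtain ⟨f', hf', hdrop⟩ := exists_pscore_update_cherry_lt hab hT h1
  have hrise : pscore f T2 ≤ pscore f' T2 + 1 := by
    rcases hf' with rfl | rfl <;> exact pscore_le_pscore_update_add_one h2 f _ _
  have := natAbs_sub_pscore_le_dMP T1 T2 f'
  refine ⟨f', ?_, ?_, hdrop⟩ <;> omega

end Distance

/-- from an optimal character `f` with `l_f(T1) < l_f(T2)` one can
obtain an optimal character `f'` with `l_{f'}(T1) < l_{f'}(T2)` which is
monochromatic on every cherry of `T1`. -/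
theorem optimal_monochromatic_cherries {X : Type} (T1 T2 : PTree X)
    (h1 : IsPhylo T1) (h2 : IsPhylo T2) (f : X → ℕ)
    (hopt : ((pscore f T1 : ℤ) - (pscore f T2 : ℤ)).natAbs = dMP T1 T2)
    (hlt : pscore f T1 < pscore f T2) :
    ∃ f' : X → ℕ,
      ((pscore f' T1 : ℤ) - (pscore f' T2 : ℤ)).natAbs = dMP T1 T2 ∧
      pscore f' T1 < pscore f' T2 ∧
      ∀ a b : X, IsCherry T1 a b → f' a = f' b := by
  classical
  induction hn : pscore f T1 using Nat.strong_induction_on generalizing f with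
  | _ n ih =>
    by_cases hmono : ∀ a b, IsCherry T1 a b → f a = f b
    · exact ⟨f, hopt, hlt, hmono⟩
    push Not at hmono
    obtain ⟨a, b, hT, hab⟩ := hmono
    obtain ⟨f', hopt', hlt', hdrop⟩ := exists_optimal_update_cherry h1.1 h2.1 hopt hlt hT hab
    exact ih _ (hn ▸ hdrop) f' hopt' hlt' rfl

end MPDist
end

section
/- For the 24-taxon rooted binary trees T^2_A and T^2_B: the maximum over all characters f of (l_f(T^2_B) − l_f(T^2_A)) is at least 8, the maximum over all characters f of (l_f(T^2_A) − l_f(T^2_B)) is at most 5, and consequently gap(T^2_A, T^2_B) ≥ 3. -/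
namespace MPDist

/-! ### Auxiliary development -/

section OptionNat

/-- Min-plus addition on `Option ℕ` (`none` = infinity). -/
def oadd : Option ℕ → Option ℕ → Option ℕ
  | some a, some b => some (a+b)
  | _, _ => none

/-- Minimum on `Option ℕ` (`none` = infinity). -/
def omin : Option ℕ → Option ℕ → Option ℕ
  | some a, some b => some (min a b)
  | some a, none => some a
  | none, b => b

/-- Order on `Option ℕ` (`none` = infinity). -/
def ole : Option ℕ → Option ℕ → Bool
  | _, none => true
  | none, some _ => false
  | some a, some b => Nat.ble a b

@[simp] lemma oadd_some {a b : ℕ} : oadd (some a) (some b) = some (a+b) := rfl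
@[simp] lemma oadd_none_l {b : Option ℕ} : oadd none b = none := rfl
@[simp] lemma oadd_none_r {a : Option ℕ} : oadd a none = none := by cases a <;> rfl
@[simp] lemma ole_none {a : Option ℕ} : ole a none = true := by cases a <;> rfl
@[simp] lemma ole_some_some {a b : ℕ} : ole (some a) (some b) = true ↔ a ≤ b := by
  simp [ole, Nat.ble_eq]

lemma ole_refl (a : Option ℕ) : ole a a = true := by
  cases a <;> simp

lemma ole_trans {a b c : Option ℕ} (h1 : ole a b = true) (h2 : ole b c = true) :
    ole a c = true := by
  cases a <;> cases b <;> cases c <;> simp_all [ole, Nat.ble_eq] <;> omega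

lemma ole_some_dest {a : Option ℕ} {n : ℕ} (h : ole a (some n) = true) :
    ∃ m, a = some m ∧ m ≤ n := by
  cases a with
  | none => simp [ole] at h
  | some m => exact ⟨m, rfl, by simpa using h⟩

lemma ole_oadd_mono {a b : Option ℕ} {m n : ℕ} (h1 : ole a (some m) = true)
    (h2 : ole b (some n) = true) : ole (oadd a b) (some (m+n)) = true := by
  obtain ⟨a', ha, ha'⟩ := ole_some_dest h1
  obtain ⟨b', hb, hb'⟩ := ole_some_dest h2
  subst ha hb; simp [oadd]; omega

lemma omin_le_left {a b : Option ℕ} : ole (omin a b) a = true := by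
  cases a <;> cases b <;> simp [omin, ole, Nat.ble_eq] <;> omega

lemma omin_le_right {a b : Option ℕ} : ole (omin a b) b = true := by
  cases a <;> cases b <;> simp [omin, ole, Nat.ble_eq] <;> omega

lemma omin_eq_or (a b : Option ℕ) : omin a b = a ∨ omin a b = b := by
  cases a <;> cases b <;> simp [omin] <;> omega

lemma le_omin {a b c : Option ℕ} (h1 : ole c a = true) (h2 : ole c b = true) :
    ole c (omin a b) = true := by
  rcases omin_eq_or a b with h | h <;> rw [h] <;> assumption

/-- Fold of `omin` over a mapped list is a lower bound. -/
lemma foldr_omin_le {C : Type} {s : C → Option ℕ} {L : List C} {c : C} (hc : c ∈ L) :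
    ole ((L.map s).foldr omin none) (s c) = true := by
  induction L with
  | nil => simp at hc
  | cons d L ih =>
    simp only [List.map_cons, List.foldr_cons]
    rcases List.mem_cons.mp hc with h | h
    · subst h; exact omin_le_left
    · exact ole_trans omin_le_right (ih h)

/-- Fold of `omin` is attained (or the list contributes nothing). -/
lemma foldr_omin_attained {C : Type} {s : C → Option ℕ} {L : List C} :
    ((L.map s).foldr omin none) = none ∨ ∃ c ∈ L, ((L.map s).foldr omin none) = s c := by
  induction L with
  | nil => left; rfl
  | cons d L ih =>
    simp only [List.map_cons, List.foldr_cons]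
    rcases omin_eq_or (s d) ((L.map s).foldr omin none) with h | h
    · right; exact ⟨d, by simp, h⟩
    · rcases ih with h' | ⟨c, hc, h'⟩
      · rw [h, h']; left; rfl
      · right; exact ⟨c, by simp [hc], by rw [h, h']⟩

end OptionNat


section Basic
variable {X Y C C' : Type} [DecidableEq C] [DecidableEq C']

/-- A canonical extension of `f` to `t`. -/
def cext (f : X → C) : PTree X → ETree C
  | .leaf x => .leaf (f x)
  | .node l r => .node (cext f l).root (cext f l) (cext f r)

lemma cext_isExtension (f : X → C) : ∀ t, IsExtension f t (cext f t)
  | .leaf x => .leaf x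
  | .node l r => .node _ (cext_isExtension f l) (cext_isExtension f r)

lemma pscore_set_nonempty (f : X → C) (t : PTree X) :
    {k : ℕ | ∃ g : ETree C, IsExtension f t g ∧ g.changes = k}.Nonempty :=
  ⟨_, cext f t, cext_isExtension f t, rfl⟩

lemma pscore_le {f : X → C} {t : PTree X} {g : ETree C} (h : IsExtension f t g) :
    pscore f t ≤ g.changes :=
  Nat.sInf_le ⟨g, h, rfl⟩

lemma exists_opt (f : X → C) (t : PTree X) :
    ∃ g : ETree C, IsExtension f t g ∧ g.changes = pscore f t :=
  Nat.sInf_mem (pscore_set_nonempty f t)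

/-- The number of edges of a tree. -/
def esize {X : Type} : PTree X → ℕ
  | .leaf _ => 0
  | .node l r => esize l + esize r + 2

lemma changes_le_esize {f : X → C} {t : PTree X} {g : ETree C} (h : IsExtension f t g) :
    g.changes ≤ esize t := by
  induction h with
  | leaf x => simp [ETree.changes, esize]
  | node c hl hr ihl ihr =>
    simp only [ETree.changes, esize]
    split <;> split <;> omega

lemma pscore_le_esize (f : X → C) (t : PTree X) : pscore f t ≤ esize t :=
  le_trans (pscore_le (cext_isExtension f t)) (changes_le_esize (cext_isExtension f t))

@[simp] lemma pscore_leaf (f : X → C) (x : X) : pscore f (.leaf x) = 0 :=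
  Nat.le_antisymm (pscore_le (.leaf x)) (Nat.zero_le _)

lemma pscore_node_lower (f : X → C) (l r : PTree X) :
    pscore f l + pscore f r ≤ pscore f (.node l r) := by
  obtain ⟨g, hg, hval⟩ := exists_opt f (.node l r)
  cases hg with
  | @node _ _ gl gr c hl hr =>
    have h1 := pscore_le hl
    have h2 := pscore_le hr
    rw [← hval]
    simp only [ETree.changes]
    omega

lemma pscore_node_upper (f : X → C) (l r : PTree X) :
    pscore f (.node l r) ≤ pscore f l + pscore f r + 1 := by
  obtain ⟨gl, hgl, hl⟩ := exists_opt f l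
  obtain ⟨gr, hgr, hr⟩ := exists_opt f r
  have h := pscore_le (IsExtension.node gl.root hgl hgr)
  simp only [ETree.changes, if_pos rfl] at h
  by_cases hc : gr.root = gl.root <;> simp [hc] at h <;> omega

/-- Relabelling of states of an extension. -/
def emapS (σ : C → C') : ETree C → ETree C'
  | .leaf c => .leaf (σ c)
  | .node c l r => .node (σ c) (emapS σ l) (emapS σ r)

@[simp] lemma emapS_root (σ : C → C') (g : ETree C) : (emapS σ g).root = σ g.root := by
  cases g <;> rfl

lemma emapS_changes_le (σ : C → C') (g : ETree C) : (emapS σ g).changes ≤ g.changes := by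
  induction g with
  | leaf c => simp [emapS, ETree.changes]
  | node c l r ihl ihr =>
    simp only [emapS, ETree.changes, emapS_root]
    have h1 : (if σ l.root = σ c then 0 else 1) ≤ (if l.root = c then 0 else 1) := by
      by_cases h : l.root = c
      · simp [h]
      · split <;> omega
    have h2 : (if σ r.root = σ c then 0 else 1) ≤ (if r.root = c then 0 else 1) := by
      by_cases h : r.root = c
      · simp [h]
      · split <;> omega
    omega

lemma isExtension_emapS {σ : C → C'} {f : X → C} {t : PTree X} {g : ETree C}
    (h : IsExtension f t g) : IsExtension (fun x => σ (f x)) t (emapS σ g) := by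
  induction h with
  | leaf x => exact .leaf x
  | node c _ _ ihl ihr => exact .node (σ c) ihl ihr

lemma pscore_comp_le (σ : C → C') (f : X → C) (t : PTree X) :
    pscore (fun x => σ (f x)) t ≤ pscore f t := by
  obtain ⟨g, hg, hval⟩ := exists_opt f t
  calc pscore (fun x => σ (f x)) t ≤ (emapS σ g).changes := pscore_le (isExtension_emapS hg)
  _ ≤ g.changes := emapS_changes_le σ g
  _ = pscore f t := hval

lemma isExtension_congr {f f' : X → C} : ∀ (t : PTree X) (g : ETree C),
    (∀ x ∈ t.leaves, f x = f' x) → IsExtension f t g → IsExtension f' t g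
  | .leaf x, _, hff, .leaf _ => by
      rw [hff x (by simp [PTree.leaves])]; exact .leaf x
  | .node l r, _, hff, .node c hl hr =>
      .node c
        (isExtension_congr l _ (fun x hx => hff x (by simp [PTree.leaves]; exact Or.inl hx)) hl)
        (isExtension_congr r _ (fun x hx => hff x (by simp [PTree.leaves]; exact Or.inr hx)) hr)

lemma pscore_congr {f f' : X → C} {t : PTree X} (hff : ∀ x ∈ t.leaves, f x = f' x) :
    pscore f t = pscore f' t := by
  unfold pscore; congr 1; ext k; constructor
  · rintro ⟨g, hg, rfl⟩; exact ⟨g, isExtension_congr t g hff hg, rfl⟩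
  · rintro ⟨g, hg, rfl⟩; exact ⟨g, isExtension_congr t g (fun x hx => (hff x hx).symm) hg, rfl⟩

lemma isExtension_map {φ : X → Y} {f : Y → C} : ∀ (t : PTree X) (g : ETree C),
    IsExtension f (t.map φ) g → IsExtension (fun x => f (φ x)) t g
  | .leaf x, _, h => by cases h; exact .leaf x
  | .node l r, _, h => by
      cases h with
      | node c hl hr => exact .node c (isExtension_map l _ hl) (isExtension_map r _ hr)

lemma isExtension_map' {φ : X → Y} {f : Y → C} : ∀ (t : PTree X) (g : ETree C),
    IsExtension (fun x => f (φ x)) t g → IsExtension f (t.map φ) g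
  | .leaf x, _, h => by cases h; exact .leaf (φ x)
  | .node l r, _, h => by
      cases h with
      | node c hl hr => exact .node c (isExtension_map' l _ hl) (isExtension_map' r _ hr)

lemma pscore_map (φ : X → Y) (f : Y → C) (t : PTree X) :
    pscore f (t.map φ) = pscore (fun x => f (φ x)) t := by
  unfold pscore; congr 1; ext k; constructor
  · rintro ⟨g, hg, rfl⟩; exact ⟨g, isExtension_map t g hg, rfl⟩
  · rintro ⟨g, hg, rfl⟩; exact ⟨g, isExtension_map' t g hg, rfl⟩

end Basic


section Sankoff
variable {X Y C : Type} [DecidableEq C]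

lemma ole_oadd_mono2 {a b : Option ℕ} {m n : ℕ} (h1 : ole (some m) a = true)
    (h2 : ole (some n) b = true) : ole (some (m+n)) (oadd a b) = true := by
  cases a <;> cases b <;> simp_all [ole, oadd, Nat.ble_eq] <;> omega

/-- Sankoff dynamic program: minimal number of changes of an extension of `f` to `t`
with a given root state (`none` = impossible), states drawn from `L`. -/
def sank (f : X → C) (L : List C) : PTree X → C → Option ℕ
  | .leaf x => fun c => if f x = c then some 0 else none
  | .node l r =>
    let sl := sank f L l
    let sr := sank f L r
    let ml := (L.map sl).foldr omin none
    let mr := (L.map sr).foldr omin none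
    fun c => oadd (omin (sl c) (oadd ml (some 1))) (omin (sr c) (oadd mr (some 1)))

/-- Minimal number of changes over all root states. -/
def smin (f : X → C) (L : List C) (t : PTree X) : Option ℕ :=
  (L.map (sank f L t)).foldr omin none

/-- The list of optimal root states. -/
def oset (f : X → C) (L : List C) (t : PTree X) : List C :=
  L.filter (fun c => sank f L t c == smin f L t)

lemma sank_leaf (f : X → C) (L : List C) (x : X) (c : C) :
    sank f L (.leaf x) c = if f x = c then some 0 else none := rfl

lemma sank_node (f : X → C) (L : List C) (l r : PTree X) (c : C) :
    sank f L (.node l r) c =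
      oadd (omin (sank f L l c) (oadd (smin f L l) (some 1)))
           (omin (sank f L r c) (oadd (smin f L r) (some 1))) := rfl

lemma smin_le {f : X → C} {L : List C} {t : PTree X} {c : C} (hc : c ∈ L) :
    ole (smin f L t) (sank f L t c) = true := foldr_omin_le hc

lemma mem_oset {f : X → C} {L : List C} {t : PTree X} {c : C} :
    c ∈ oset f L t ↔ c ∈ L ∧ sank f L t c = smin f L t := by
  simp [oset, List.mem_filter]

lemma sank_le_changes {L : List C} (hL : ∀ c : C, c ∈ L) {f : X → C} {t : PTree X}
    {g : ETree C} (h : IsExtension f t g) :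
    ole (sank f L t g.root) (some g.changes) = true := by
  induction h with
  | leaf x => simp [ETree.root, ETree.changes, sank_leaf]
  | @node l r gl gr c hl hr ihl ihr =>
    rw [show (ETree.node c gl gr).root = c from rfl, sank_node]
    have Hl : ole (omin (sank f L l c) (oadd (smin f L l) (some 1)))
        (some (gl.changes + (if gl.root = c then 0 else 1))) = true := by
      by_cases hc : gl.root = c
      · have h2 := ole_trans (omin_le_left (a := sank f L l c)
          (b := oadd (smin f L l) (some 1))) (hc ▸ ihl)
        simpa [hc] using h2
      · rw [if_neg hc]
        refine ole_trans omin_le_right ?_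
        exact ole_oadd_mono (ole_trans (smin_le (hL gl.root)) ihl) (ole_refl (some 1))
    have Hr : ole (omin (sank f L r c) (oadd (smin f L r) (some 1)))
        (some (gr.changes + (if gr.root = c then 0 else 1))) = true := by
      by_cases hc : gr.root = c
      · have h2 := ole_trans (omin_le_left (a := sank f L r c)
          (b := oadd (smin f L r) (some 1))) (hc ▸ ihr)
        simpa [hc] using h2
      · rw [if_neg hc]
        refine ole_trans omin_le_right ?_
        exact ole_oadd_mono (ole_trans (smin_le (hL gr.root)) ihr) (ole_refl (some 1))
    have e : (ETree.node c gl gr).changes =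
        (gl.changes + (if gl.root = c then 0 else 1)) +
        (gr.changes + (if gr.root = c then 0 else 1)) := by
      simp only [ETree.changes]; omega
    rw [e]
    exact ole_oadd_mono Hl Hr

lemma sank_realized {L : List C} (hL : ∀ c : C, c ∈ L) (f : X → C) :
    ∀ (t : PTree X) (c : C), sank f L t c = none ∨
      ∃ g : ETree C, IsExtension f t g ∧ g.root = c ∧
        ole (some g.changes) (sank f L t c) = true := by
  intro t
  induction t with
  | leaf x =>
    intro c
    by_cases h : f x = c
    · right; exact ⟨.leaf (f x), .leaf x, h, by simp [sank_leaf, h, ETree.changes]⟩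
    · left; simp [sank_leaf, h]
  | node l r ihl ihr =>
    intro c
    have comp : ∀ (s : PTree X),
        (∀ c', sank f L s c' = none ∨ ∃ g, IsExtension f s g ∧ g.root = c' ∧
          ole (some g.changes) (sank f L s c') = true) →
        (omin (sank f L s c) (oadd (smin f L s) (some 1)) = none) ∨
        ∃ g, IsExtension f s g ∧
          ole (some (g.changes + (if g.root = c then 0 else 1)))
              (omin (sank f L s c) (oadd (smin f L s) (some 1))) = true := by
      intro s ih
      rcases omin_eq_or (sank f L s c) (oadd (smin f L s) (some 1)) with he | he
      · rcases ih c with hnone | ⟨g, hg, hroot, hle⟩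
        · left; rw [he, hnone]
        · right; refine ⟨g, hg, ?_⟩
          rw [he, hroot, if_pos rfl]
          simpa [hroot] using hle
      · rcases foldr_omin_attained (s := sank f L s) (L := L) with hsm | ⟨c', _, hsm⟩
        · left; rw [he, show smin f L s = none from hsm]; rfl
        · rcases ih c' with hnone | ⟨g, hg, hroot, hle⟩
          · left; rw [he, show smin f L s = sank f L s c' from hsm, hnone]; rfl
          · right; refine ⟨g, hg, ?_⟩
            rw [he, show smin f L s = sank f L s c' from hsm]
            have h1 : ole (some (g.changes + 1)) (oadd (sank f L s c') (some 1)) = true :=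
              ole_oadd_mono2 hle (ole_refl (some 1))
            refine ole_trans ?_ h1
            have : g.changes + (if g.root = c then 0 else 1) ≤ g.changes + 1 := by
              split <;> omega
            exact ole_some_some.mpr this
    rcases comp l ihl with hnl | ⟨gl, hgl, Hl⟩
    · left; rw [sank_node, hnl]; rfl
    rcases comp r ihr with hnr | ⟨gr, hgr, Hr⟩
    · left; rw [sank_node, hnr]; exact oadd_none_r
    right
    refine ⟨.node c gl gr, .node c hgl hgr, rfl, ?_⟩
    rw [sank_node]
    have e : (ETree.node c gl gr).changes =
        (gl.changes + (if gl.root = c then 0 else 1)) +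
        (gr.changes + (if gr.root = c then 0 else 1)) := by
      simp only [ETree.changes]; omega
    rw [show (ETree.node c gl gr).changes =
        (gl.changes + (if gl.root = c then 0 else 1)) +
        (gr.changes + (if gr.root = c then 0 else 1)) from e]
    exact ole_oadd_mono2 Hl Hr

lemma smin_eq_pscore {L : List C} (hL : ∀ c : C, c ∈ L) (f : X → C) (t : PTree X) :
    smin f L t = some (pscore f t) := by
  obtain ⟨g, hg, hval⟩ := exists_opt f t
  have h1 : ole (smin f L t) (some (pscore f t)) = true := by
    rw [← hval]; exact ole_trans (smin_le (hL g.root)) (sank_le_changes hL hg)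
  obtain ⟨j, hj, hjle⟩ := ole_some_dest h1
  rcases foldr_omin_attained (s := sank f L t) (L := L) with hsm | ⟨c, hcL, hsm⟩
  · rw [show smin f L t = none from hsm] at hj; cases hj
  · have hs : sank f L t c = some j := by
      rw [← show smin f L t = sank f L t c from hsm]; exact hj
    rcases sank_realized hL f t c with hnone | ⟨g', hg', _, hle⟩
    · rw [hnone] at hs; cases hs
    · rw [hs] at hle
      have h2 : g'.changes ≤ j := ole_some_some.mp hle
      have h3 : pscore f t ≤ g'.changes := pscore_le hg'
      have : j = pscore f t := by omega
      rw [hj, this]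

lemma oset_exists {L : List C} (hL : ∀ c : C, c ∈ L) (f : X → C) (t : PTree X) :
    ∃ c, c ∈ oset f L t := by
  rcases foldr_omin_attained (s := sank f L t) (L := L) with hsm | ⟨c, hcL, hsm⟩
  · have := smin_eq_pscore hL f t
    rw [show smin f L t = none from hsm] at this; cases this
  · exact ⟨c, mem_oset.mpr ⟨hcL, (show smin f L t = sank f L t c from hsm).symm⟩⟩

lemma omin_trunc {L : List C} (hL : ∀ c : C, c ∈ L) (f : X → C) (t : PTree X) (c : C) :
    omin (sank f L t c) (oadd (smin f L t) (some 1)) =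
      some (pscore f t + (if c ∈ oset f L t then 0 else 1)) := by
  by_cases h : c ∈ oset f L t
  · rw [if_pos h]
    have hs : sank f L t c = some (pscore f t) :=
      (mem_oset.mp h).2.trans (smin_eq_pscore hL f t)
    rw [hs, smin_eq_pscore hL]
    show some (min (pscore f t) (pscore f t + 1)) = some (pscore f t + 0)
    congr 1; omega
  · rw [if_neg h]
    have hge := smin_le (f := f) (L := L) (t := t) (hL c)
    rw [smin_eq_pscore hL] at hge
    rw [smin_eq_pscore hL]
    cases hs : sank f L t c with
    | none => rfl
    | some j =>
      have hne : j ≠ pscore f t := by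
        intro he
        exact h (mem_oset.mpr ⟨hL c, by rw [hs, smin_eq_pscore hL, he]⟩)
      rw [hs] at hge
      have : pscore f t ≤ j := ole_some_some.mp hge
      show some (min j (pscore f t + 1)) = some (pscore f t + 1)
      congr 1; omega

lemma sank_node_eq {L : List C} (hL : ∀ c : C, c ∈ L) (f : X → C) (l r : PTree X) (c : C) :
    sank f L (.node l r) c =
      some ((pscore f l + (if c ∈ oset f L l then 0 else 1)) +
            (pscore f r + (if c ∈ oset f L r then 0 else 1))) := by
  rw [sank_node, omin_trunc hL f l c, omin_trunc hL f r c]; rfl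

lemma pscore_node_eq_of_inter {L : List C} (hL : ∀ c : C, c ∈ L) {f : X → C} {l r : PTree X}
    {c : C} (hcl : c ∈ oset f L l) (hcr : c ∈ oset f L r) :
    pscore f (.node l r) = pscore f l + pscore f r := by
  have h1 := pscore_node_lower f l r
  have h2 : ole (smin f L (.node l r)) (some (pscore f l + pscore f r)) = true := by
    refine ole_trans (smin_le (hL c)) ?_
    rw [sank_node_eq hL f l r c, if_pos hcl, if_pos hcr]
    exact ole_some_some.mpr (by omega)
  rw [smin_eq_pscore hL] at h2
  have := ole_some_some.mp h2
  omega

lemma pscore_node_eq_of_disj {L : List C} (hL : ∀ c : C, c ∈ L) {f : X → C} {l r : PTree X}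
    (hd : ∀ c : C, ¬(c ∈ oset f L l ∧ c ∈ oset f L r)) :
    pscore f (.node l r) = pscore f l + pscore f r + 1 := by
  have h1 := pscore_node_upper f l r
  rcases foldr_omin_attained (s := sank f L (.node l r)) (L := L) with hsm | ⟨c, hcL, hsm⟩
  · have := smin_eq_pscore hL f (.node l r)
    rw [show smin f L (.node l r) = none from hsm] at this; cases this
  · have heq : sank f L (.node l r) c = some (pscore f (.node l r)) := by
      rw [← show smin f L (.node l r) = sank f L (.node l r) c from hsm,
        smin_eq_pscore hL]
    rw [sank_node_eq hL f l r c] at heq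
    injection heq with hv
    have hni := hd c
    by_cases hl' : c ∈ oset f L l <;> by_cases hr' : c ∈ oset f L r <;>
      simp [hl', hr'] at hv hni <;> omega

lemma mem_oset_node_inter {L : List C} (hL : ∀ c : C, c ∈ L) {f : X → C} {l r : PTree X}
    {c0 c : C} (hcl : c0 ∈ oset f L l) (hcr : c0 ∈ oset f L r) :
    (c ∈ oset f L (.node l r) ↔ c ∈ oset f L l ∧ c ∈ oset f L r) := by
  have hps := pscore_node_eq_of_inter hL hcl hcr
  constructor
  · intro h
    obtain ⟨hcL, hs⟩ := mem_oset.mp h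
    rw [smin_eq_pscore hL, hps, sank_node_eq hL f l r c] at hs
    injection hs with hv
    by_cases hl' : c ∈ oset f L l <;> by_cases hr' : c ∈ oset f L r <;>
      simp [hl', hr'] at hv ⊢ <;> omega
  · rintro ⟨h1, h2⟩
    refine mem_oset.mpr ⟨(mem_oset.mp h1).1, ?_⟩
    rw [sank_node_eq hL f l r c, if_pos h1, if_pos h2, smin_eq_pscore hL, hps]
    congr 1

lemma mem_oset_node_disj {L : List C} (hL : ∀ c : C, c ∈ L) {f : X → C} {l r : PTree X}
    {c : C} (hd : ∀ c : C, ¬(c ∈ oset f L l ∧ c ∈ oset f L r)) :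
    (c ∈ oset f L (.node l r) ↔ c ∈ oset f L l ∨ c ∈ oset f L r) := by
  have hps := pscore_node_eq_of_disj hL hd
  constructor
  · intro h
    obtain ⟨hcL, hs⟩ := mem_oset.mp h
    rw [smin_eq_pscore hL, hps, sank_node_eq hL f l r c] at hs
    injection hs with hv
    by_cases hl' : c ∈ oset f L l <;> by_cases hr' : c ∈ oset f L r <;>
      simp [hl', hr'] at hv ⊢ <;> omega
  · intro h
    have hcL : c ∈ L := by
      rcases h with h | h
      · exact (mem_oset.mp h).1
      · exact (mem_oset.mp h).1
    refine mem_oset.mpr ⟨hcL, ?_⟩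
    rw [sank_node_eq hL f l r c, smin_eq_pscore hL, hps]
    have hni := hd c
    rcases h with h | h
    · have h2 : c ∉ oset f L r := fun h' => hni ⟨h, h'⟩
      rw [if_pos h, if_neg h2]; congr 1
    · have h2 : c ∉ oset f L l := fun h' => hni ⟨h', h⟩
      rw [if_pos h, if_neg h2]; congr 1; omega

lemma mem_oset_leaf {L : List C} (hL : ∀ c : C, c ∈ L) {f : X → C} {x : X} {c : C} :
    c ∈ oset f L (.leaf x) ↔ c = f x := by
  rw [mem_oset]
  constructor
  · rintro ⟨hcL, hs⟩
    rw [smin_eq_pscore hL, pscore_leaf, sank_leaf] at hs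
    by_cases h : f x = c
    · exact h.symm
    · simp [h] at hs
  · rintro rfl
    exact ⟨hL _, by rw [smin_eq_pscore hL, pscore_leaf, sank_leaf, if_pos rfl]⟩

lemma oset_subset_leaves {L : List C} (hL : ∀ c : C, c ∈ L) {f : X → C} :
    ∀ {t : PTree X} {c : C}, c ∈ oset f L t → ∃ x ∈ t.leaves, f x = c := by
  intro t
  induction t with
  | leaf x =>
    intro c hc
    exact ⟨x, by simp [PTree.leaves], ((mem_oset_leaf hL).mp hc).symm⟩
  | node l r ihl ihr =>
    intro c hc
    by_cases hint : ∃ c0, c0 ∈ oset f L l ∧ c0 ∈ oset f L r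
    · obtain ⟨c0, h1, h2⟩ := hint
      obtain ⟨hc1, _⟩ := (mem_oset_node_inter hL h1 h2).mp hc
      obtain ⟨x, hx, hfx⟩ := ihl hc1
      exact ⟨x, by simp [PTree.leaves]; exact Or.inl hx, hfx⟩
    · have hd : ∀ c0 : C, ¬(c0 ∈ oset f L l ∧ c0 ∈ oset f L r) := by
        intro c0 hc0; exact hint ⟨c0, hc0⟩
      rcases (mem_oset_node_disj hL hd).mp hc with h | h
      · obtain ⟨x, hx, hfx⟩ := ihl h
        exact ⟨x, by simp [PTree.leaves]; exact Or.inl hx, hfx⟩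
      · obtain ⟨x, hx, hfx⟩ := ihr h
        exact ⟨x, by simp [PTree.leaves]; exact Or.inr hx, hfx⟩

lemma sank_congr {f f' : X → C} {L : List C} : ∀ (t : PTree X),
    (∀ x ∈ t.leaves, f x = f' x) → sank f L t = sank f' L t
  | .leaf x, h => by
      funext c; rw [sank_leaf, sank_leaf, h x (by simp [PTree.leaves])]
  | .node l r, h => by
      have hl := sank_congr (f := f) (f' := f') (L := L) l
        (fun x hx => h x (by simp [PTree.leaves]; exact Or.inl hx))
      have hr := sank_congr (f := f) (f' := f') (L := L) r
        (fun x hx => h x (by simp [PTree.leaves]; exact Or.inr hx))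
      funext c
      rw [sank_node, sank_node]
      unfold smin
      rw [hl, hr]

lemma oset_congr {f f' : X → C} {L : List C} {t : PTree X}
    (h : ∀ x ∈ t.leaves, f x = f' x) : oset f L t = oset f' L t := by
  unfold oset smin
  rw [sank_congr t h]

lemma sank_map {φ : X → Y} {f : Y → C} {L : List C} : ∀ (t : PTree X),
    sank f L (t.map φ) = sank (fun x => f (φ x)) L t
  | .leaf x => by funext c; rfl
  | .node l r => by
      have hl := sank_map (φ := φ) (f := f) (L := L) l
      have hr := sank_map (φ := φ) (f := f) (L := L) r
      funext c
      show sank f L (.node (l.map φ) (r.map φ)) c = _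
      rw [sank_node, sank_node]
      unfold smin
      rw [hl, hr]

lemma oset_map {φ : X → Y} {f : Y → C} {L : List C} {t : PTree X} :
    oset f L (t.map φ) = oset (fun x => f (φ x)) L t := by
  unfold oset smin
  rw [sank_map t]

end Sankoff


section Relabel
variable {X C C' : Type} [DecidableEq C] [DecidableEq C']

/-- Relabelling states by a map that is injective on the leaf values preserves the
parsimony score, and maps the optimal-root-state set accordingly. -/
lemma relabel {L : List C} {L' : List C'} (hL : ∀ c : C, c ∈ L) (hL' : ∀ c : C', c ∈ L')
    (σ : C → C') (f : X → C) :
    ∀ (t : PTree X),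
      (∀ x ∈ t.leaves, ∀ y ∈ t.leaves, σ (f x) = σ (f y) → f x = f y) →
      pscore (fun x => σ (f x)) t = pscore f t ∧
      (∀ c', c' ∈ oset (fun x => σ (f x)) L' t ↔ ∃ c, c ∈ oset f L t ∧ c' = σ c) := by
  intro t
  induction t with
  | leaf x =>
    intro _
    refine ⟨by simp, fun c' => ?_⟩
    rw [mem_oset_leaf hL']
    constructor
    · rintro rfl; exact ⟨f x, (mem_oset_leaf hL).mpr rfl, rfl⟩
    · rintro ⟨c, hc, rfl⟩; rw [(mem_oset_leaf hL).mp hc]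
  | node l r ihl ihr =>
    intro hinj
    have meml : ∀ x ∈ l.leaves, x ∈ (PTree.node l r).leaves := by
      intro x hx; simp [PTree.leaves]; exact Or.inl hx
    have memr : ∀ x ∈ r.leaves, x ∈ (PTree.node l r).leaves := by
      intro x hx; simp [PTree.leaves]; exact Or.inr hx
    obtain ⟨hpl, hol⟩ := ihl (fun x hx y hy => hinj x (meml x hx) y (meml y hy))
    obtain ⟨hpr, hor⟩ := ihr (fun x hx y hy => hinj x (memr x hx) y (memr y hy))
    have key : ∀ {ca cb : C}, ca ∈ oset f L l → cb ∈ oset f L r → σ ca = σ cb → ca = cb := by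
      intro ca cb hca hcb he
      obtain ⟨xa, hxa, hfa⟩ := oset_subset_leaves hL hca
      obtain ⟨xb, hxb, hfb⟩ := oset_subset_leaves hL hcb
      rw [← hfa, ← hfb]
      exact hinj xa (meml xa hxa) xb (memr xb hxb) (by rw [hfa, hfb, he])
    by_cases hint : ∃ c0, c0 ∈ oset f L l ∧ c0 ∈ oset f L r
    · obtain ⟨c0, h1, h2⟩ := hint
      have h1' : σ c0 ∈ oset (fun x => σ (f x)) L' l := (hol (σ c0)).mpr ⟨c0, h1, rfl⟩
      have h2' : σ c0 ∈ oset (fun x => σ (f x)) L' r := (hor (σ c0)).mpr ⟨c0, h2, rfl⟩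
      refine ⟨?_, ?_⟩
      · rw [pscore_node_eq_of_inter hL' h1' h2', pscore_node_eq_of_inter hL h1 h2, hpl, hpr]
      · intro c'
        rw [mem_oset_node_inter hL' h1' h2']
        constructor
        · rintro ⟨ha, hb⟩
          obtain ⟨ca, hca, rfl⟩ := (hol c').mp ha
          obtain ⟨cb, hcb, he⟩ := (hor _).mp hb
          have hab : ca = cb := key hca hcb he
          exact ⟨ca, (mem_oset_node_inter hL h1 h2).mpr ⟨hca, hab ▸ hcb⟩, rfl⟩
        · rintro ⟨c, hc, rfl⟩
          obtain ⟨hca, hcb⟩ := (mem_oset_node_inter hL h1 h2).mp hc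
          exact ⟨(hol _).mpr ⟨c, hca, rfl⟩, (hor _).mpr ⟨c, hcb, rfl⟩⟩
    · have hd : ∀ c0, ¬(c0 ∈ oset f L l ∧ c0 ∈ oset f L r) := fun c0 hc0 => hint ⟨c0, hc0⟩
      have hd' : ∀ c0', ¬(c0' ∈ oset (fun x => σ (f x)) L' l ∧
          c0' ∈ oset (fun x => σ (f x)) L' r) := by
        rintro c0' ⟨ha, hb⟩
        obtain ⟨ca, hca, rfl⟩ := (hol _).mp ha
        obtain ⟨cb, hcb, he⟩ := (hor _).mp hb
        exact hd ca ⟨hca, (key hca hcb he) ▸ hcb⟩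
      refine ⟨?_, ?_⟩
      · rw [pscore_node_eq_of_disj hL' hd', pscore_node_eq_of_disj hL hd, hpl, hpr]
      · intro c'
        rw [mem_oset_node_disj hL' hd']
        constructor
        · rintro (h | h)
          · obtain ⟨ca, hca, rfl⟩ := (hol _).mp h
            exact ⟨ca, (mem_oset_node_disj hL hd).mpr (Or.inl hca), rfl⟩
          · obtain ⟨cb, hcb, rfl⟩ := (hor _).mp h
            exact ⟨cb, (mem_oset_node_disj hL hd).mpr (Or.inr hcb), rfl⟩
        · rintro ⟨c, hc, rfl⟩
          rcases (mem_oset_node_disj hL hd).mp hc with h | h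
          · exact Or.inl ((hol _).mpr ⟨c, h, rfl⟩)
          · exact Or.inr ((hor _).mpr ⟨c, h, rfl⟩)

end Relabel

section Canon
variable {α : Type} [DecidableEq α]

/-- Index of the first occurrence of `c` among `f 0, …, f (n-1)`. -/
def fidxo (f : ℕ → α) (c : α) : ℕ → Option ℕ
  | 0 => none
  | n+1 => match fidxo f c n with
    | some i => some i
    | none => if f n = c then some n else none

lemma fidxo_spec (f : ℕ → α) (c : α) :
    ∀ n i, fidxo f c n = some i → i < n ∧ f i = c := by
  intro n
  induction n with
  | zero => intro i h; cases h
  | succ n ih =>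
    intro i h
    unfold fidxo at h
    cases he : fidxo f c n with
    | some j =>
      rw [he] at h
      simp at h
      obtain ⟨h1, h2⟩ := ih _ he
      exact ⟨by omega, h ▸ h2⟩
    | none =>
      rw [he] at h
      simp at h
      obtain ⟨hfc, rfl⟩ := h
      exact ⟨by omega, hfc⟩

lemma fidxo_complete (f : ℕ → α) (c : α) :
    ∀ n i, i < n → f i = c → ∃ j, fidxo f c n = some j ∧ j ≤ i := by
  intro n
  induction n with
  | zero => intro i h; omega
  | succ n ih =>
    intro i hi hfc
    by_cases h : i < n
    · obtain ⟨j, hj, hji⟩ := ih i h hfc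
      refine ⟨j, ?_, hji⟩
      unfold fidxo; rw [hj]
    · have : i = n := by omega
      subst this
      cases he : fidxo f c i with
      | some j =>
        have := (fidxo_spec f c i j he).1
        refine ⟨j, ?_, by omega⟩
        unfold fidxo; rw [he]
      | none =>
        refine ⟨i, ?_, le_refl i⟩
        unfold fidxo; rw [he]; simp [hfc]

/-- Canonical form of a character: replace each value by the first position carrying it. -/
def canonF (m : ℕ) (hm : 0 < m) (f : ℕ → α) : ℕ → Fin m :=
  fun n => ⟨(fidxo f (f n) m).getD 0 % m, Nat.mod_lt _ hm⟩

lemma canonF_prop (m : ℕ) (hm : 0 < m) (f : ℕ → α) {n : ℕ} (hn : n < m) :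
    ((canonF m hm f n : ℕ) ≤ n) ∧ f ((canonF m hm f n : ℕ)) = f n := by
  obtain ⟨j, hj, hji⟩ := fidxo_complete f (f n) m n hn rfl
  have hsp := fidxo_spec f (f n) m j hj
  have : (canonF m hm f n : ℕ) = j := by
    simp [canonF, hj, Nat.mod_eq_of_lt hsp.1]
  rw [this]
  exact ⟨hji, hsp.2⟩

lemma canonF_congr (m : ℕ) (hm : 0 < m) (f : ℕ → α) {i j : ℕ} (h : f i = f j) :
    canonF m hm f i = canonF m hm f j := by
  simp [canonF, h]

/-- Master canonicalization: on a tree whose leaves are `< m`, a character can be replaced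
by its canonical `Fin m`-valued form, preserving the score and (up to relabelling) the
optimal root states. -/
lemma canon_master {L' : List α} (hL' : ∀ c : α, c ∈ L') {m : ℕ} (hm : 0 < m)
    {Lm : List (Fin m)} (hLm : ∀ c : Fin m, c ∈ Lm)
    (f : ℕ → α) (t : PTree ℕ) (hlv : ∀ x ∈ t.leaves, x < m) :
    pscore f t = pscore (canonF m hm f) t ∧
    (∀ c', c' ∈ oset f L' t ↔
      ∃ c, c ∈ oset (canonF m hm f) Lm t ∧ c' = f ((c : Fin m) : ℕ)) := by
  set u := canonF m hm f with hu
  set σ : Fin m → α := fun k => f (k : ℕ) with hσ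
  have hagree : ∀ x ∈ t.leaves, (fun x => σ (u x)) x = f x := by
    intro x hx
    exact (canonF_prop m hm f (hlv x hx)).2
  have hinj : ∀ x ∈ t.leaves, ∀ y ∈ t.leaves, σ (u x) = σ (u y) → u x = u y := by
    intro x hx y hy he
    have hx' := (canonF_prop m hm f (hlv x hx)).2
    have hy' := (canonF_prop m hm f (hlv y hy)).2
    exact canonF_congr m hm f (by rw [← hx', ← hy']; exact he)
  obtain ⟨hps, hos⟩ := relabel hLm hL' σ u t hinj
  constructor
  · rw [← hps]
    exact (pscore_congr hagree).symm
  · intro c'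
    rw [← oset_congr (f := fun x => σ (u x)) (f' := f) (L := L') hagree]
    exact hos c'
end Canon


section Concrete

lemma canonF_pscore {α : Type} [DecidableEq α] {m : ℕ} (hm : 0 < m) (f : ℕ → α)
    (t : PTree ℕ) (hlv : ∀ x ∈ t.leaves, x < m) :
    pscore (canonF m hm f) t = pscore f t := by
  apply le_antisymm
  · exact pscore_comp_le (fun c => (⟨(fidxo f c m).getD 0 % m, Nat.mod_lt _ hm⟩ : Fin m)) f t
  · have hagree : ∀ x ∈ t.leaves, f x = (fun n => f ((canonF m hm f n : Fin m) : ℕ)) x := by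
      intro x hx
      exact ((canonF_prop m hm f (hlv x hx)).2).symm
    calc pscore f t = pscore (fun n => f ((canonF m hm f n : Fin m) : ℕ)) t :=
          pscore_congr hagree
    _ ≤ pscore (canonF m hm f) t :=
          pscore_comp_le (fun k : Fin m => f (k : ℕ)) (canonF m hm f) t

def L6 : List (Fin 6) := List.finRange 6
def L12 : List (Fin 12) := List.finRange 12
lemma mem_L6 : ∀ c : Fin 6, c ∈ L6 := List.mem_finRange
lemma mem_L12 : ∀ c : Fin 12, c ∈ L12 := List.mem_finRange

/-- A character on `{0,…,5}` given by six values. -/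
def fOf (a b c d e f : Fin 6) : ℕ → Fin 6 := fun n =>
  match n % 6 with
  | 0 => a | 1 => b | 2 => c | 3 => d | 4 => e | _ => f

set_option maxRecDepth 100000 in
set_option maxHeartbeats 10000000 in
/-- The per-copy invariant, verified by enumeration of all canonical characters. -/
theorem base_dec : ∀ a b c d e f : Fin 6,
    (a:ℕ) ≤ 0 → (b:ℕ) ≤ 1 → (c:ℕ) ≤ 2 → (d:ℕ) ≤ 3 → (e:ℕ) ≤ 4 →
    (ole (smin (fOf a b c d e f) L6 Ta6) (oadd (smin (fOf a b c d e f) L6 Tb6) (some 1)) = true ∧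
     (smin (fOf a b c d e f) L6 Ta6 = oadd (smin (fOf a b c d e f) L6 Tb6) (some 1) →
       ∀ x : Fin 6, x ∈ oset (fOf a b c d e f) L6 Tb6 → x ∈ oset (fOf a b c d e f) L6 Ta6)) := by
  decide

/-- The per-copy invariant for arbitrary canonical `Fin 6`-characters. -/
lemma inv6 (v : ℕ → Fin 6) (hcan : ∀ i : ℕ, i < 6 → (v i : ℕ) ≤ i) :
    pscore v Ta6 ≤ pscore v Tb6 + 1 ∧
    (pscore v Ta6 = pscore v Tb6 + 1 →
      ∀ x, x ∈ oset v L6 Tb6 → x ∈ oset v L6 Ta6) := by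
  have hagree_a : ∀ x ∈ Ta6.leaves, fOf (v 0) (v 1) (v 2) (v 3) (v 4) (v 5) x = v x := by
    intro x hx
    simp [Ta6, PTree.leaves] at hx
    rcases hx with rfl | rfl | rfl | rfl | rfl | rfl <;> rfl
  have hagree_b : ∀ x ∈ Tb6.leaves, fOf (v 0) (v 1) (v 2) (v 3) (v 4) (v 5) x = v x := by
    intro x hx
    simp [Tb6, PTree.leaves] at hx
    rcases hx with rfl | rfl | rfl | rfl | rfl | rfl <;> rfl
  obtain ⟨hle, him⟩ := base_dec (v 0) (v 1) (v 2) (v 3) (v 4) (v 5)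
    (hcan 0 (by norm_num)) (hcan 1 (by norm_num)) (hcan 2 (by norm_num))
    (hcan 3 (by norm_num)) (hcan 4 (by norm_num))
  set w := fOf (v 0) (v 1) (v 2) (v 3) (v 4) (v 5) with hw
  have hpa : pscore w Ta6 = pscore v Ta6 := pscore_congr hagree_a
  have hpb : pscore w Tb6 = pscore v Tb6 := pscore_congr hagree_b
  have hoa : oset w L6 Ta6 = oset v L6 Ta6 := oset_congr hagree_a
  have hob : oset w L6 Tb6 = oset v L6 Tb6 := oset_congr hagree_b
  rw [smin_eq_pscore mem_L6, smin_eq_pscore mem_L6] at hle him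
  constructor
  · have : pscore w Ta6 ≤ pscore w Tb6 + 1 := by
      have := hle
      simp only [oadd_some] at this
      exact ole_some_some.mp this
    omega
  · intro he x hx
    rw [← hoa]
    refine him ?_ x (by rw [hob]; exact hx)
    simp only [oadd_some]
    congr 1
    omega

/-- The per-copy invariant for arbitrary `Fin 12`-characters. -/
lemma inv6' (h : ℕ → Fin 12) (t1 t2 : PTree ℕ) (h1 : t1 = Ta6) (h2 : t2 = Tb6) :
    pscore h t1 ≤ pscore h t2 + 1 ∧
    (pscore h t1 = pscore h t2 + 1 →
      ∀ x, x ∈ oset h L12 t2 → x ∈ oset h L12 t1) := by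
  subst h1 h2
  have h6 : (0:ℕ) < 6 := by norm_num
  have hlv_a : ∀ x ∈ Ta6.leaves, x < 6 := by decide
  have hlv_b : ∀ x ∈ Tb6.leaves, x < 6 := by decide
  obtain ⟨hpa, hoa⟩ := canon_master mem_L12 h6 mem_L6 h Ta6 hlv_a
  obtain ⟨hpb, hob⟩ := canon_master mem_L12 h6 mem_L6 h Tb6 hlv_b
  have hcan : ∀ i : ℕ, i < 6 → ((canonF 6 h6 h i : Fin 6) : ℕ) ≤ i :=
    fun i hi => (canonF_prop 6 h6 h hi).1
  obtain ⟨I1, I2⟩ := inv6 (canonF 6 h6 h) hcan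
  rw [hpa, hpb]
  refine ⟨I1, fun he x hx => ?_⟩
  obtain ⟨c, hc, rfl⟩ := (hob x).mp hx
  exact (hoa _).mpr ⟨c, I2 he c hc, rfl⟩

/-- The 12-taxon claim: `l_f(T_A) ≤ l_f(T_B) + 2` for every character. -/
lemma claim12 (f : ℕ → ℕ) : pscore f TA12 ≤ pscore f TB12 + 2 := by
  have h12 : (0:ℕ) < 12 := by norm_num
  have hlv_A : ∀ x ∈ TA12.leaves, x < 12 := by decide
  have hlv_B : ∀ x ∈ TB12.leaves, x < 12 := by decide
  rw [← canonF_pscore h12 f TA12 hlv_A, ← canonF_pscore h12 f TB12 hlv_B]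
  set v := canonF 12 h12 f with hv
  -- decompose the two 6-taxon copies
  have hsh_a : pscore v (shiftT 6 Ta6) = pscore (fun n => v (n + 6)) Ta6 := pscore_map _ v Ta6
  have hsh_b : pscore v (shiftT 6 Tb6) = pscore (fun n => v (n + 6)) Tb6 := pscore_map _ v Tb6
  have hosh_a : oset v L12 (shiftT 6 Ta6) = oset (fun n => v (n + 6)) L12 Ta6 := oset_map
  have hosh_b : oset v L12 (shiftT 6 Tb6) = oset (fun n => v (n + 6)) L12 Tb6 := oset_map
  obtain ⟨I1a, I1b⟩ := inv6' v Ta6 Tb6 rfl rfl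
  obtain ⟨I2a, I2b⟩ := inv6' (fun n => v (n + 6)) Ta6 Tb6 rfl rfl
  have hBup : pscore v TB12 = pscore v Tb6 + pscore v (shiftT 6 Tb6) ∨
      pscore v TB12 = pscore v Tb6 + pscore v (shiftT 6 Tb6) + 1 := by
    by_cases hb : ∃ c, c ∈ oset v L12 Tb6 ∧ c ∈ oset v L12 (shiftT 6 Tb6)
    · obtain ⟨c, hc1, hc2⟩ := hb
      exact Or.inl (pscore_node_eq_of_inter mem_L12 hc1 hc2)
    · exact Or.inr (pscore_node_eq_of_disj mem_L12 (fun c hc => hb ⟨c, hc⟩))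
  have hAup : pscore v TA12 ≤ pscore v Ta6 + pscore v (shiftT 6 Ta6) + 1 :=
    pscore_node_upper v Ta6 (shiftT 6 Ta6)
  have I2a' : pscore v (shiftT 6 Ta6) ≤ pscore v (shiftT 6 Tb6) + 1 := by
    rw [hsh_a, hsh_b]; exact I2a
  rcases hBup with hB | hB
  · by_cases hmax : pscore v Ta6 = pscore v Tb6 + 1 ∧
        pscore v (shiftT 6 Ta6) = pscore v (shiftT 6 Tb6) + 1
    · obtain ⟨hm1, hm2⟩ := hmax
      by_cases hbc : ∃ c, c ∈ oset v L12 Tb6 ∧ c ∈ oset v L12 (shiftT 6 Tb6)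
      · obtain ⟨c, hc1, hc2⟩ := hbc
        have ha1 : c ∈ oset v L12 Ta6 := I1b hm1 c hc1
        have hm2' : pscore (fun n => v (n + 6)) Ta6 = pscore (fun n => v (n + 6)) Tb6 + 1 := by
          rw [← hsh_a, ← hsh_b]; exact hm2
        have ha2 : c ∈ oset v L12 (shiftT 6 Ta6) := by
          rw [hosh_a]; exact I2b hm2' c (by rw [← hosh_b]; exact hc2)
        have hAeq : pscore v TA12 = pscore v Ta6 + pscore v (shiftT 6 Ta6) :=
          pscore_node_eq_of_inter mem_L12 ha1 ha2
        omega
      · exfalso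
        have hBd : pscore v TB12 = pscore v Tb6 + pscore v (shiftT 6 Tb6) + 1 :=
          pscore_node_eq_of_disj mem_L12 (fun c hc => hbc ⟨c, hc⟩)
        omega
    · rcases not_and_or.mp hmax with hm | hm <;> omega
  · omega

/-- The final upper bound: `l_f(T²_A) ≤ l_f(T²_B) + 5` for every character. -/
lemma claim5 (f : ℕ → ℕ) : pscore f (TkA 1) ≤ pscore f (TkB 1) + 5 := by
  have hA : pscore f (TkA 1) ≤ pscore f TA12 + pscore f (shiftT 12 TA12) + 1 := by
    have : TkA 1 = .node TA12 (shiftT 12 TA12) := rfl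
    rw [this]
    exact pscore_node_upper f TA12 (shiftT 12 TA12)
  have hB : pscore f TB12 + pscore f (shiftT 12 TB12) ≤ pscore f (TkB 1) := by
    have : TkB 1 = .node TB12 (shiftT 12 TB12) := rfl
    rw [this]
    exact pscore_node_lower f TB12 (shiftT 12 TB12)
  have h1 := claim12 f
  have h2 : pscore f (shiftT 12 TA12) ≤ pscore f (shiftT 12 TB12) + 2 := by
    have ha : pscore f (shiftT 12 TA12) = pscore (fun n => f (n + 12)) TA12 := pscore_map _ f _
    have hb : pscore f (shiftT 12 TB12) = pscore (fun n => f (n + 12)) TB12 := pscore_map _ f _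
    rw [ha, hb]
    exact claim12 (fun n => f (n + 12))
  omega

/-- The witness character for the lower bound. -/
def witL : List ℕ := [5,0,0,1,1,5, 5,0,0,1,1,5, 5,0,0,1,1,5, 5,2,2,3,3,5]
def wit6 : ℕ → Fin 6 := fun n => ⟨witL.getD n 0 % 6, Nat.mod_lt _ (by norm_num)⟩
def witN : ℕ → ℕ := fun n => (wit6 n : ℕ)

set_option maxRecDepth 100000 in
set_option maxHeartbeats 10000000 in
lemma wit_sminA : smin wit6 L6 (TkA 1) = some 8 := by decide

set_option maxRecDepth 100000 in
set_option maxHeartbeats 10000000 in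
lemma wit_sminB : smin wit6 L6 (TkB 1) = some 16 := by decide

lemma wit_pscore_eq (t : PTree ℕ) : pscore witN t = pscore wit6 t := by
  apply le_antisymm
  · exact pscore_comp_le Fin.val wit6 t
  · have he : wit6 = fun n => ((⟨(witN n) % 6, Nat.mod_lt _ (by norm_num)⟩ : Fin 6)) := by
      funext n
      apply Fin.ext
      simp [witN, Nat.mod_eq_of_lt (wit6 n).isLt]
    calc pscore wit6 t = pscore (fun n => ((⟨(witN n) % 6, Nat.mod_lt _ (by norm_num)⟩ : Fin 6))) t := by rw [← he]
    _ ≤ pscore witN t := pscore_comp_le (fun k : ℕ => (⟨k % 6, Nat.mod_lt _ (by norm_num)⟩ : Fin 6)) witN t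

lemma wit_pscoreA : pscore witN (TkA 1) = 8 := by
  have h := smin_eq_pscore mem_L6 wit6 (TkA 1)
  rw [wit_sminA] at h
  injection h with h
  rw [wit_pscore_eq, ← h]

lemma wit_pscoreB : pscore witN (TkB 1) = 16 := by
  have h := smin_eq_pscore mem_L6 wit6 (TkB 1)
  rw [wit_sminB] at h
  injection h with h
  rw [wit_pscore_eq, ← h]

end Concrete

/-- for the 24-taxon trees `T^2_A` and `T^2_B`:
`max_f (l_f(T^2_B) − l_f(T^2_A)) ≥ 8`, `max_f (l_f(T^2_A) − l_f(T^2_B)) ≤ 5`,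
hence `gap(T^2_A, T^2_B) ≥ 3`. (Recall `TkA 1 = T^2_A`, `TkB 1 = T^2_B`.) -/
theorem T2A_T2B_gap :
    8 ≤ maxDiff (TkA 1) (TkB 1) ∧
    maxDiff (TkB 1) (TkA 1) ≤ 5 ∧
    3 ≤ gap (TkA 1) (TkB 1) := by
  have h1 : (8:ℤ) ≤ maxDiff (TkA 1) (TkB 1) := by
    have hbdd : BddAbove {d : ℤ | ∃ f : ℕ → ℕ,
        d = (pscore f (TkB 1) : ℤ) - (pscore f (TkA 1) : ℤ)} := by
      refine ⟨(esize (TkB 1) : ℤ), ?_⟩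
      rintro d ⟨f, rfl⟩
      have h := pscore_le_esize f (TkB 1)
      omega
    have hmem : (8:ℤ) ∈ {d : ℤ | ∃ f : ℕ → ℕ,
        d = (pscore f (TkB 1) : ℤ) - (pscore f (TkA 1) : ℤ)} :=
      ⟨witN, by rw [wit_pscoreA, wit_pscoreB]; norm_num⟩
    exact le_csSup hbdd hmem
  have h2 : maxDiff (TkB 1) (TkA 1) ≤ 5 := by
    apply csSup_le
    · exact ⟨_, ⟨witN, rfl⟩⟩
    · rintro d ⟨f, rfl⟩
      have := claim5 f
      omega
  refine ⟨h1, h2, ?_⟩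
  unfold gap
  have h3 := le_abs_self (maxDiff (TkA 1) (TkB 1) - maxDiff (TkB 1) (TkA 1))
  omega

end MPDist
end

section
/- For every integer k ≥ 1, gap(T^k_A, T^k_B) ≥ k + 1. -/
namespace MPDist

/-!
Parsimony scores are computed by the Fitch–Sankoff recursion. By Fitch's rule, joining two trees
at a root adds their scores if their sets of optimal root states meet (the new set being the
intersection), and adds one more otherwise (the new set being the union). Hence a bound
`l_f(A) ≤ l_f(B) + t` that comes with the clause "if it is tight, every optimal root state of `B` is
one of `A`" is additive under joining trees. For `T_a` and `T_b` it holds with `t = 1` for every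
character: after renaming states this is a finite check over the 203 restricted growth strings of
length six. So `l_f(T^k_A) ≤ l_f(T^k_B) + 2k` for every `f`.

Conversely, the character giving states `0, 1, 1, 2, 2, 0` to the taxa `1, …, 6` of every copy
costs 2 on each copy of `T_a`, always with `0` as an optimal root state, but 4 on each copy of
`T_b`. So `l_f(T^k_B) - l_f(T^k_A) ≥ 8k - 4k` for this `f`, and the gap is at least
`4k - 2k ≥ k + 1`.
-/

open Function

section FitchSankoff
variable {X C : Type} [DecidableEq C]

/-- The least number of mutations of an extension of `f` to `T` together with one extra edge from
the root of `T` to a parent vertex in state `c`. -/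
noncomputable def parentCost (f : X → C) : PTree X → C → ℕ
  | .leaf x => fun c => if f x = c then 0 else 1
  | .node l r => fun c =>
      min (parentCost f l c + parentCost f r c)
        (sInf (Set.range fun c' => parentCost f l c' + parentCost f r c') + 1)

noncomputable def minCost (f : X → C) (T : PTree X) : ℕ := sInf (Set.range (parentCost f T))

/-- The Fitch set: the states taken at the root by the optimal extensions of `f` to `T`. -/
def fitchSet (f : X → C) (T : PTree X) : Set C := {c | parentCost f T c = minCost f T}

theorem minCost_le_parentCost (f : X → C) (T : PTree X) (c : C) :
    minCost f T ≤ parentCost f T c :=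
  Nat.sInf_le ⟨c, rfl⟩

theorem parentCost_node_le (f : X → C) (l r : PTree X) (c d : C) :
    parentCost f (.node l r) c ≤ parentCost f l d + parentCost f r d + if d = c then 0 else 1 := by
  change min _ (_ + 1) ≤ _
  split_ifs with h
  · subst h; exact min_le_left _ _
  · exact (min_le_right _ _).trans (Nat.succ_le_succ (Nat.sInf_le ⟨d, rfl⟩))

variable [Nonempty C]

theorem fitchSet_nonempty (f : X → C) (T : PTree X) : (fitchSet f T).Nonempty :=
  Nat.sInf_mem (Set.range_nonempty _)

theorem minCost_node (f : X → C) (l r : PTree X) :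
    minCost f (.node l r) = sInf (Set.range fun c => parentCost f l c + parentCost f r c) := by
  set I := sInf (Set.range fun c => parentCost f l c + parentCost f r c)
  obtain ⟨c₀, hc₀⟩ : I ∈ Set.range fun c => parentCost f l c + parentCost f r c :=
    Nat.sInf_mem (Set.range_nonempty _)
  refine le_antisymm ((minCost_le_parentCost f _ c₀).trans ?_) (le_csInf (Set.range_nonempty _) ?_)
  · exact (min_le_left _ _).trans hc₀.le
  · rintro _ ⟨c, rfl⟩
    have : I ≤ parentCost f l c + parentCost f r c := Nat.sInf_le ⟨c, rfl⟩
    exact le_min this (Nat.le_succ I)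

theorem parentCost_le_minCost_add_one (f : X → C) (T : PTree X) (c : C) :
    parentCost f T c ≤ minCost f T + 1 := by
  cases T with
  | leaf x => unfold parentCost; split <;> omega
  | node l r => rw [minCost_node]; exact min_le_right _ _

theorem mem_fitchSet_node {f : X → C} {l r : PTree X} {c : C} :
    c ∈ fitchSet f (.node l r) ↔ parentCost f l c + parentCost f r c = minCost f (.node l r) := by
  have : minCost f (.node l r) ≤ parentCost f l c + parentCost f r c :=
    minCost_node f l r ▸ Nat.sInf_le ⟨c, rfl⟩
  change min _ (_ + 1) = _ ↔ _
  rw [← minCost_node]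
  omega

theorem add_minCost_le_minCost_node (f : X → C) (l r : PTree X) :
    minCost f l + minCost f r ≤ minCost f (.node l r) := by
  rw [minCost_node]
  refine le_csInf (Set.range_nonempty _) ?_
  rintro _ ⟨c, rfl⟩
  exact add_le_add (minCost_le_parentCost f l c) (minCost_le_parentCost f r c)

theorem minCost_node_le (f : X → C) (l r : PTree X) :
    minCost f (.node l r) ≤ minCost f l + minCost f r + 1 := by
  obtain ⟨c, hc⟩ := fitchSet_nonempty f l
  have hr := parentCost_le_minCost_add_one f r c
  have : minCost f (.node l r) ≤ parentCost f l c + parentCost f r c :=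
    minCost_node f l r ▸ Nat.sInf_le ⟨c, rfl⟩
  rw [fitchSet, Set.mem_ofPred_eq] at hc
  omega

theorem minCost_node_of_inter {f : X → C} {l r : PTree X}
    (h : (fitchSet f l ∩ fitchSet f r).Nonempty) :
    minCost f (.node l r) = minCost f l + minCost f r := by
  obtain ⟨c, hl, hr⟩ := h
  refine le_antisymm ?_ (add_minCost_le_minCost_node f l r)
  rw [minCost_node, ← hl, ← hr]
  exact Nat.sInf_le ⟨c, rfl⟩

theorem minCost_node_of_disjoint {f : X → C} {l r : PTree X}
    (h : Disjoint (fitchSet f l) (fitchSet f r)) :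
    minCost f (.node l r) = minCost f l + minCost f r + 1 := by
  refine le_antisymm (minCost_node_le f l r) ?_
  rw [minCost_node]
  refine le_csInf (Set.range_nonempty _) ?_
  rintro _ ⟨c, rfl⟩
  dsimp only
  have hl := minCost_le_parentCost f l c
  have hr := minCost_le_parentCost f r c
  have : ¬ (c ∈ fitchSet f l ∧ c ∈ fitchSet f r) := fun hc => h.notMem_of_mem_left hc.1 hc.2
  simp only [fitchSet, Set.mem_ofPred_eq] at this
  omega

theorem fitchSet_node_of_inter {f : X → C} {l r : PTree X}
    (h : (fitchSet f l ∩ fitchSet f r).Nonempty) :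
    fitchSet f (.node l r) = fitchSet f l ∩ fitchSet f r := by
  ext c
  have hl := minCost_le_parentCost f l c
  have hr := minCost_le_parentCost f r c
  rw [mem_fitchSet_node, minCost_node_of_inter h]
  simp only [Set.mem_inter_iff, fitchSet, Set.mem_ofPred_eq]
  omega

theorem fitchSet_node_of_disjoint {f : X → C} {l r : PTree X}
    (h : Disjoint (fitchSet f l) (fitchSet f r)) :
    fitchSet f (.node l r) = fitchSet f l ∪ fitchSet f r := by
  ext c
  have hl := minCost_le_parentCost f l c
  have hr := minCost_le_parentCost f r c
  have hl' := parentCost_le_minCost_add_one f l c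
  have hr' := parentCost_le_minCost_add_one f r c
  have : ¬ (c ∈ fitchSet f l ∧ c ∈ fitchSet f r) := fun hc => h.notMem_of_mem_left hc.1 hc.2
  rw [mem_fitchSet_node, minCost_node_of_disjoint h]
  simp only [Set.mem_union, fitchSet, Set.mem_ofPred_eq] at this ⊢
  omega

theorem minCost_lt_length_leaves (f : X → C) (T : PTree X) : minCost f T < T.leaves.length := by
  induction T with
  | leaf x =>
    exact (minCost_le_parentCost f (.leaf x) (f x)).trans_lt (by simp [parentCost, PTree.leaves])
  | node l r ihl ihr =>
    have := minCost_node_le f l r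
    simp only [PTree.leaves, List.length_append]
    omega

end FitchSankoff

section Extensions
variable {X C : Type} [DecidableEq C]

theorem parentCost_le_changes {f : X → C} {T : PTree X} {g : ETree C} (h : IsExtension f T g)
    (c : C) : parentCost f T c ≤ g.changes + if g.root = c then 0 else 1 := by
  induction h generalizing c with
  | leaf x => exact Nat.le_add_left _ _
  | @node l r gl gr d _ _ ihl ihr =>
    have := parentCost_node_le f l r c d
    have := ihl d
    have := ihr d
    simp only [ETree.changes.eq_2, ETree.root.eq_2]
    omega

variable [Nonempty C]

theorem exists_parentCost_node_eq (f : X → C) (l r : PTree X) (c : C) :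
    ∃ d, parentCost f (.node l r) c =
      parentCost f l d + parentCost f r d + if d = c then 0 else 1 := by
  obtain ⟨d, hd⟩ :=
    Nat.sInf_mem (Set.range_nonempty fun c' => parentCost f l c' + parentCost f r c')
  have hmin : parentCost f (.node l r) c =
      min (parentCost f l c + parentCost f r c) (parentCost f l d + parentCost f r d + 1) := by
    rw [show parentCost f l d + parentCost f r d = _ from hd]; rfl
  rw [hmin]
  by_cases hc : parentCost f l c + parentCost f r c ≤ parentCost f l d + parentCost f r d + 1
  · exact ⟨c, by rw [if_pos rfl, min_eq_left hc]; rfl⟩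
  · refine ⟨d, ?_⟩
    rw [min_eq_right (by omega), if_neg]
    rintro rfl
    omega

theorem exists_extension_add_le_parentCost (f : X → C) (T : PTree X) (c : C) :
    ∃ g, IsExtension f T g ∧ g.changes + (if g.root = c then 0 else 1) ≤ parentCost f T c := by
  induction T generalizing c with
  | leaf x => exact ⟨.leaf (f x), .leaf x, (zero_add _).le⟩
  | node l r ihl ihr =>
    obtain ⟨d, hd⟩ := exists_parentCost_node_eq f l r c
    obtain ⟨gl, hgl, hl⟩ := ihl d
    obtain ⟨gr, hgr, hr⟩ := ihr d
    refine ⟨.node d gl gr, .node d hgl hgr, ?_⟩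
    simp only [ETree.changes.eq_2, ETree.root.eq_2]
    omega

theorem pscore_eq_minCost (f : X → C) (T : PTree X) : pscore f T = minCost f T := by
  obtain ⟨c, hc⟩ := fitchSet_nonempty f T
  obtain ⟨g, hg, hgc⟩ := exists_extension_add_le_parentCost f T c
  have hle : pscore f T ≤ g.changes := Nat.sInf_le ⟨g, hg, rfl⟩
  refine le_antisymm (by rw [fitchSet, Set.mem_ofPred_eq] at hc; omega) ?_
  refine le_csInf ⟨g.changes, g, hg, rfl⟩ ?_
  rintro _ ⟨g', hg', rfl⟩
  simpa using (minCost_le_parentCost f T g'.root).trans (parentCost_le_changes hg' g'.root)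

end Extensions

theorem eq_iff_eq_extend_of_injective {C D : Type} {ι : C → D} (hι : Injective ι) {c₀ c : C}
    (hc : c ≠ c₀) (d : D) : ι c = d ↔ c = extend ι id (fun _ => c₀) d := by
  by_cases hd : ∃ a, ι a = d
  · obtain ⟨a, rfl⟩ := hd
    rw [hι.extend_apply, hι.eq_iff, id]
  · rw [extend_apply' _ _ _ hd]
    exact iff_of_false (fun h => hd ⟨c, h⟩) hc

theorem surjective_extend_id_of_injective {C D : Type} {ι : C → D} (hι : Injective ι)
    (e : D → C) : Surjective (extend ι id e) :=
  fun c => ⟨ι c, hι.extend_apply _ _ c⟩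

section Relabel
variable {X Y C D : Type} [DecidableEq C] [DecidableEq D]

theorem parentCost_map (f : X → C) (φ : Y → X) (T : PTree Y) :
    parentCost f (T.map φ) = parentCost (f ∘ φ) T := by
  induction T with
  | leaf x => rfl
  | node l r ihl ihr => funext c; simp only [PTree.map, parentCost, ihl, ihr]

theorem minCost_map (f : X → C) (φ : Y → X) (T : PTree Y) :
    minCost f (T.map φ) = minCost (f ∘ φ) T := by
  rw [minCost, parentCost_map, minCost]

theorem fitchSet_map (f : X → C) (φ : Y → X) (T : PTree Y) :
    fitchSet f (T.map φ) = fitchSet (f ∘ φ) T := by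
  rw [fitchSet, parentCost_map, minCost_map, fitchSet]

/-- `extend ι id (fun _ => c₀)` sends `ι c` to `c` and every state outside the range of `ι` to the
state `c₀`, which `f` does not use. -/
theorem parentCost_relabel {ι : C → D} (hι : Injective ι) {c₀ : C} {f : X → C} {g : X → D}
    {T : PTree X} (hf : ∀ x ∈ T.leaves, f x ≠ c₀) (hg : ∀ x ∈ T.leaves, g x = ι (f x)) :
    parentCost g T = parentCost f T ∘ extend ι id (fun _ => c₀) := by
  induction T with
  | leaf x =>
    funext d
    simp only [PTree.leaves, List.mem_singleton, forall_eq] at hf hg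
    simp only [parentCost, comp_apply, hg, eq_iff_eq_extend_of_injective hι hf]
  | node l r ihl ihr =>
    simp only [PTree.leaves, List.mem_append] at hf hg
    have hl := ihl (fun x hx => hf x (.inl hx)) (fun x hx => hg x (.inl hx))
    have hr := ihr (fun x hx => hf x (.inr hx)) (fun x hx => hg x (.inr hx))
    funext d
    simp only [parentCost, hl, hr, comp_apply]
    rw [← (surjective_extend_id_of_injective hι _).range_comp
      (fun c => parentCost f l c + parentCost f r c)]
    rfl

theorem minCost_relabel {ι : C → D} (hι : Injective ι) {c₀ : C} {f : X → C} {g : X → D}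
    {T : PTree X} (hf : ∀ x ∈ T.leaves, f x ≠ c₀) (hg : ∀ x ∈ T.leaves, g x = ι (f x)) :
    minCost g T = minCost f T := by
  rw [minCost, parentCost_relabel hι hf hg, (surjective_extend_id_of_injective hι _).range_comp,
    minCost]

theorem fitchSet_relabel {ι : C → D} (hι : Injective ι) {c₀ : C} {f : X → C} {g : X → D}
    {T : PTree X} (hf : ∀ x ∈ T.leaves, f x ≠ c₀) (hg : ∀ x ∈ T.leaves, g x = ι (f x)) :
    fitchSet g T = extend ι id (fun _ => c₀) ⁻¹' fitchSet f T := by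
  ext d
  simp only [fitchSet, Set.mem_preimage, Set.mem_ofPred_eq, parentCost_relabel hι hf hg,
    minCost_relabel hι hf hg, comp_apply]

end Relabel

section ScoreBound
variable {X Y C D : Type} [DecidableEq C] [DecidableEq D]

/-- The tightness clause is what makes these bounds add up when trees are joined at a root. -/
def ScoreBound (t : ℕ) (f : X → C) (A B : PTree X) : Prop :=
  minCost f A ≤ minCost f B + t ∧ (minCost f A = minCost f B + t → fitchSet f B ⊆ fitchSet f A)

theorem ScoreBound.map {t : ℕ} {f : X → C} {A B : PTree Y} {φ : Y → X}
    (h : ScoreBound t (f ∘ φ) A B) : ScoreBound t f (A.map φ) (B.map φ) := by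
  simpa only [ScoreBound, minCost_map, fitchSet_map] using h

theorem ScoreBound.relabel {t : ℕ} {ι : C → D} (hι : Injective ι) {c₀ : C} {f : X → C}
    {g : X → D} {A B : PTree X} (hf : ∀ x ∈ A.leaves ++ B.leaves, f x ≠ c₀)
    (hg : ∀ x ∈ A.leaves ++ B.leaves, g x = ι (f x)) (h : ScoreBound t f A B) :
    ScoreBound t g A B := by
  simp only [List.mem_append] at hf hg
  have hfA := fun x hx => hf x (.inl hx)
  have hfB := fun x hx => hf x (.inr hx)
  have hgA := fun x hx => hg x (.inl hx)
  have hgB := fun x hx => hg x (.inr hx)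
  rw [ScoreBound, minCost_relabel hι hfA hgA, minCost_relabel hι hfB hgB,
    fitchSet_relabel hι hfA hgA, fitchSet_relabel hι hfB hgB]
  exact ⟨h.1, fun heq => Set.preimage_mono (h.2 heq)⟩

variable [Nonempty C]

theorem ScoreBound.node {t₁ t₂ : ℕ} {f : X → C} {A₁ B₁ A₂ B₂ : PTree X}
    (h₁ : ScoreBound t₁ f A₁ B₁) (h₂ : ScoreBound t₂ f A₂ B₂) :
    ScoreBound (t₁ + t₂) f (.node A₁ A₂) (.node B₁ B₂) := by
  obtain ⟨hle₁, hsub₁⟩ := h₁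
  obtain ⟨hle₂, hsub₂⟩ := h₂
  rcases Set.disjoint_or_nonempty_inter (fitchSet f A₁) (fitchSet f A₂) with hA | hA <;>
  rcases Set.disjoint_or_nonempty_inter (fitchSet f B₁) (fitchSet f B₂) with hB | hB
  · rw [ScoreBound, minCost_node_of_disjoint hA, minCost_node_of_disjoint hB,
      fitchSet_node_of_disjoint hA, fitchSet_node_of_disjoint hB]
    refine ⟨by omega, fun heq => Set.union_subset_union (hsub₁ (by omega)) (hsub₂ (by omega))⟩
  · -- both bounds cannot be tight: a common optimal state of `B₁, B₂` would be common to `A₁, A₂`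
    have : ¬ (minCost f A₁ = minCost f B₁ + t₁ ∧ minCost f A₂ = minCost f B₂ + t₂) :=
      fun ⟨e₁, e₂⟩ => hA.notMem_of_mem_left (hsub₁ e₁ hB.some_mem.1) (hsub₂ e₂ hB.some_mem.2)
    rw [ScoreBound, minCost_node_of_disjoint hA, minCost_node_of_inter hB,
      fitchSet_node_of_disjoint hA, fitchSet_node_of_inter hB]
    refine ⟨by omega, fun heq => ?_⟩
    by_cases e₁ : minCost f A₁ = minCost f B₁ + t₁
    · exact fun c hc => .inl (hsub₁ e₁ hc.1)
    · exact fun c hc => .inr (hsub₂ (by omega) hc.2)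
  · rw [ScoreBound, minCost_node_of_inter hA, minCost_node_of_disjoint hB]
    exact ⟨by omega, fun heq => by omega⟩
  · rw [ScoreBound, minCost_node_of_inter hA, minCost_node_of_inter hB,
      fitchSet_node_of_inter hA, fitchSet_node_of_inter hB]
    refine ⟨by omega, fun heq => Set.inter_subset_inter (hsub₁ (by omega)) (hsub₂ (by omega))⟩

end ScoreBound

section Computable
variable {X C : Type} [DecidableEq C] [Fintype C] [Nonempty C]

/-- A computable copy of `parentCost` for a finite set of states, so that `decide` can evaluate
parsimony scores. -/
def finParentCost (f : X → C) : PTree X → C → ℕ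
  | .leaf x => fun c => if f x = c then 0 else 1
  | .node l r => fun c =>
      min (finParentCost f l c + finParentCost f r c)
        (Finset.univ.inf' Finset.univ_nonempty
          (fun c' => finParentCost f l c' + finParentCost f r c') + 1)

def finMinCost (f : X → C) (T : PTree X) : ℕ :=
  Finset.univ.inf' Finset.univ_nonempty (finParentCost f T)

theorem finParentCost_eq (f : X → C) (T : PTree X) : finParentCost f T = parentCost f T := by
  induction T with
  | leaf x => rfl
  | node l r ihl ihr =>
    funext c
    simp only [finParentCost, parentCost, ihl, ihr, Finset.inf'_univ_eq_ciInf]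
    rfl

theorem finMinCost_eq (f : X → C) (T : PTree X) : finMinCost f T = minCost f T := by
  rw [finMinCost, finParentCost_eq, Finset.inf'_univ_eq_ciInf]
  rfl

instance (f : X → C) (T : PTree X) : DecidablePred (· ∈ fitchSet f T) := fun c =>
  decidable_of_iff (finParentCost f T c = finMinCost f T) (by
    rw [finParentCost_eq, finMinCost_eq]; rfl)

instance (t : ℕ) (f : X → C) (A B : PTree X) : Decidable (ScoreBound t f A B) :=
  decidable_of_iff (finMinCost f A ≤ finMinCost f B + t ∧
      (finMinCost f A = finMinCost f B + t → ∀ c, c ∈ fitchSet f B → c ∈ fitchSet f A)) (by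
    rw [finMinCost_eq, finMinCost_eq]; rfl)

end Computable

/-- The restricted growth strings of length `n` continuing a word that uses the letters
`0, …, m - 1`: each letter is at most the number of distinct letters before it. -/
def rgs : ℕ → ℕ → List (List ℕ)
  | 0, _ => [[]]
  | n + 1, m => (List.range (m + 1)).flatMap fun v => (rgs n (max m (v + 1))).map (v :: ·)

def pushNew (a : ℕ) (acc : List ℕ) : List ℕ := if a ∈ acc then acc else acc ++ [a]

def firstOccurrences : List ℕ → List ℕ → List ℕ
  | [], acc => acc
  | a :: L, acc => firstOccurrences L (pushNew a acc)

/-- Each entry of `L` is replaced by its position in `acc` followed by the new values of `L` in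
order of first occurrence. -/
def rgsCode : List ℕ → List ℕ → List ℕ
  | [], _ => []
  | a :: L, acc => acc.idxOf a :: rgsCode L (pushNew a acc)

theorem prefix_pushNew (a : ℕ) (acc : List ℕ) : acc <+: pushNew a acc := by
  unfold pushNew; split
  · exact List.prefix_refl acc
  · exact List.prefix_append acc [a]

theorem nodup_pushNew {acc : List ℕ} (h : acc.Nodup) (a : ℕ) : (pushNew a acc).Nodup := by
  unfold pushNew; split
  · exact h
  · next ha => exact h.append (List.nodup_singleton a) (by simpa using ha)

theorem length_pushNew (a : ℕ) (acc : List ℕ) :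
    (pushNew a acc).length = max acc.length (acc.idxOf a + 1) := by
  unfold pushNew; split
  · next ha => have := List.idxOf_lt_length_iff.mpr ha; omega
  · next ha => simp [List.idxOf_eq_length_iff.mpr ha]

theorem getD_pushNew_idxOf (a : ℕ) (acc : List ℕ) : (pushNew a acc).getD (acc.idxOf a) 0 = a := by
  unfold pushNew; split
  · next ha => rw [List.getD_eq_getElem _ _ (List.idxOf_lt_length_iff.mpr ha), List.getElem_idxOf]
  · next ha => simp [List.idxOf_eq_length_iff.mpr ha]

theorem prefix_firstOccurrences (L acc : List ℕ) : acc <+: firstOccurrences L acc := by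
  induction L generalizing acc with
  | nil => exact List.prefix_refl acc
  | cons a L ih => exact (prefix_pushNew a acc).trans (ih _)

theorem nodup_firstOccurrences {acc : List ℕ} (h : acc.Nodup) (L : List ℕ) :
    (firstOccurrences L acc).Nodup := by
  induction L generalizing acc with
  | nil => exact h
  | cons a L ih => exact ih (nodup_pushNew h a)

theorem length_firstOccurrences_le (L acc : List ℕ) :
    (firstOccurrences L acc).length ≤ acc.length + L.length := by
  induction L generalizing acc with
  | nil => simp [firstOccurrences]
  | cons a L ih =>
    have := ih (pushNew a acc)
    have := length_pushNew a acc
    have := List.idxOf_le_length (a := a) (l := acc)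
    simp only [firstOccurrences, List.length_cons] at *
    omega

theorem rgsCode_spec (L acc : List ℕ) {j : ℕ} (hj : j < L.length) :
    (rgsCode L acc).getD j 0 < (firstOccurrences L acc).length ∧
      (firstOccurrences L acc).getD ((rgsCode L acc).getD j 0) 0 = L.getD j 0 := by
  induction L generalizing acc j with
  | nil => simp at hj
  | cons a L ih =>
    cases j with
    | zero =>
      have hpre := prefix_firstOccurrences L (pushNew a acc)
      have hlt : acc.idxOf a < (pushNew a acc).length := by rw [length_pushNew]; omega
      refine ⟨hlt.trans_le hpre.length_le, ?_⟩
      obtain ⟨t, ht⟩ := hpre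
      simp only [rgsCode, firstOccurrences, List.getD_cons_zero, ← ht,
        List.getD_append _ _ _ _ hlt, getD_pushNew_idxOf]
    | succ j => exact ih _ (by simpa using hj)

theorem rgsCode_mem_rgs (L acc : List ℕ) : rgsCode L acc ∈ rgs L.length acc.length := by
  induction L generalizing acc with
  | nil => simp [rgsCode, rgs]
  | cons a L ih =>
    simp only [rgsCode, rgs, List.length_cons, List.mem_flatMap, List.mem_range, List.mem_map]
    refine ⟨acc.idxOf a, Nat.lt_succ_of_le List.idxOf_le_length, _, ?_, rfl⟩
    rw [← length_pushNew]
    exact ih _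

def charOfList (l : List ℕ) (x : ℕ) : Fin 7 := Fin.ofNat 7 (l.getD x 0)

theorem exists_injective_extending_nodup {A : List ℕ} (hA : A.Nodup) (n : ℕ) :
    ∃ ι : Fin n → ℕ, Injective ι ∧ ∀ i : Fin n, (i : ℕ) < A.length → ι i = A.getD i 0 := by
  refine ⟨fun i => if (i : ℕ) < A.length then A.getD i 0 else A.sum + 1 + i,
    fun i j hij => ?_, fun i hi => if_pos hi⟩
  have hmem : ∀ k < A.length, A.getD k 0 ≤ A.sum := fun k hk =>
    List.le_sum_of_mem (by rw [List.getD_eq_getElem _ _ hk]; exact List.getElem_mem hk)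
  dsimp only at hij
  split_ifs at hij with hi hj hj
  · rw [List.getD_eq_getElem _ _ hi, List.getD_eq_getElem _ _ hj] at hij
    exact Fin.ext (hA.getElem_inj_iff.mp hij)
  · have := hmem i hi; omega
  · have := hmem j hj; omega
  · exact Fin.ext (by omega)

theorem exists_rgs_relabel (f : ℕ → ℕ) :
    ∃ l ∈ rgs 6 0, ∃ ι : Fin 7 → ℕ, Injective ι ∧
      ∀ x < 6, charOfList l x ≠ 6 ∧ f x = ι (charOfList l x) := by
  set L := (List.range 6).map f
  obtain ⟨ι, hι, hιA⟩ :=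
    exists_injective_extending_nodup (nodup_firstOccurrences List.nodup_nil L) 7
  have hA : (firstOccurrences L []).length ≤ 6 := by simpa [L] using length_firstOccurrences_le L []
  refine ⟨rgsCode L [], by simpa [L] using rgsCode_mem_rgs L [], ι, hι, fun x hx => ?_⟩
  obtain ⟨hlt, hget⟩ := rgsCode_spec L [] (j := x) (by simpa [L] using hx)
  have hval : (charOfList (rgsCode L []) x : ℕ) = (rgsCode L []).getD x 0 := by
    rw [charOfList, Fin.val_ofNat]; omega
  refine ⟨fun h => by rw [h] at hval; omega, ?_⟩
  rw [hιA _ (hval ▸ hlt), hval, hget]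
  simp [L, hx]

theorem scoreBound_Ta6_Tb6_of_mem_rgs : ∀ l ∈ rgs 6 0, ScoreBound 1 (charOfList l) Ta6 Tb6 := by
  decide +kernel

theorem scoreBound_Ta6_Tb6 (f : ℕ → ℕ) : ScoreBound 1 f Ta6 Tb6 := by
  obtain ⟨l, hl, ι, hι, hf⟩ := exists_rgs_relabel f
  have hleaves : ∀ x ∈ Ta6.leaves ++ Tb6.leaves, x < 6 := by decide
  exact (scoreBound_Ta6_Tb6_of_mem_rgs l hl).relabel hι
    (fun x hx => (hf x (hleaves x hx)).1) (fun x hx => (hf x (hleaves x hx)).2)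

/-- Taxa `1, 2, …, 6` of every copy of `T_a` or `T_b` get the states `0, 1, 1, 2, 2, 0`. -/
def pattern (x : ℕ) : ℕ := [0, 1, 1, 2, 2, 0].getD (x % 6) 0

theorem minCost_pattern_Ta6 : minCost pattern Ta6 = 2 ∧ 0 ∈ fitchSet pattern Ta6 := by
  have hf : ∀ x ∈ Ta6.leaves, charOfList [0, 1, 1, 2, 2, 0] x ≠ 6 := by decide
  have hg : ∀ x ∈ Ta6.leaves, pattern x = charOfList [0, 1, 1, 2, 2, 0] x := by decide
  rw [minCost_relabel Fin.val_injective hf hg, fitchSet_relabel Fin.val_injective hf hg,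
    Set.mem_preimage, ← Fin.val_zero 7, Fin.val_injective.extend_apply, ← finMinCost_eq]
  decide

theorem minCost_pattern_Tb6 : minCost pattern Tb6 = 4 := by
  have hf : ∀ x ∈ Tb6.leaves, charOfList [0, 1, 1, 2, 2, 0] x ≠ 6 := by decide
  have hg : ∀ x ∈ Tb6.leaves, pattern x = charOfList [0, 1, 1, 2, 2, 0] x := by decide
  rw [minCost_relabel Fin.val_injective hf hg, ← finMinCost_eq]
  decide

theorem scoreBound_TkA_TkB (f : ℕ → ℕ) (n : ℕ) : ScoreBound (2 * (n + 1)) f (TkA n) (TkB n) := by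
  have hTA12 : ∀ g : ℕ → ℕ, ScoreBound 2 g TA12 TB12 := fun g =>
    (scoreBound_Ta6_Tb6 g).node (scoreBound_Ta6_Tb6 (g ∘ (· + 6))).map
  induction n with
  | zero => exact hTA12 f
  | succ n ih => exact ih.node (hTA12 (f ∘ (· + 12 * (n + 1)))).map

theorem parentCost_pattern_shiftT {s : ℕ} (hs : 6 ∣ s) (T : PTree ℕ) :
    parentCost pattern (shiftT s T) = parentCost pattern T := by
  obtain ⟨m, rfl⟩ := hs
  have : pattern ∘ (· + 6 * m) = pattern := funext fun x => by
    simp only [comp_apply, pattern, Nat.add_mul_mod_self_left]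
  rw [shiftT, parentCost_map, this]

theorem minCost_pattern_shiftT {s : ℕ} (hs : 6 ∣ s) (T : PTree ℕ) :
    minCost pattern (shiftT s T) = minCost pattern T := by
  rw [minCost, parentCost_pattern_shiftT hs, minCost]

theorem minCost_pattern_node_shiftT {s : ℕ} (hs : 6 ∣ s) {A B : PTree ℕ}
    (hA : 0 ∈ fitchSet pattern A) (hB : 0 ∈ fitchSet pattern B) :
    minCost pattern (.node A (shiftT s B)) = minCost pattern A + minCost pattern B ∧
      0 ∈ fitchSet pattern (.node A (shiftT s B)) := by
  have hmin := minCost_pattern_shiftT hs B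
  have hB' : 0 ∈ fitchSet pattern (shiftT s B) := by
    rwa [fitchSet, Set.mem_ofPred_eq, parentCost_pattern_shiftT hs, hmin]
  have h : (fitchSet pattern A ∩ fitchSet pattern (shiftT s B)).Nonempty := ⟨0, hA, hB'⟩
  rw [minCost_node_of_inter h, fitchSet_node_of_inter h, hmin]
  exact ⟨rfl, hA, hB'⟩

theorem minCost_pattern_TkA (n : ℕ) :
    minCost pattern (TkA n) = 4 * (n + 1) ∧ 0 ∈ fitchSet pattern (TkA n) := by
  obtain ⟨hTa6, h0⟩ := minCost_pattern_Ta6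
  have hTA12 : minCost pattern TA12 = 4 ∧ 0 ∈ fitchSet pattern TA12 := by
    obtain ⟨h, h0'⟩ := minCost_pattern_node_shiftT (dvd_refl 6) h0 h0
    exact ⟨by rw [TA12, h, hTa6], h0'⟩
  induction n with
  | zero => exact hTA12
  | succ n ih =>
    obtain ⟨hm, hmem⟩ := minCost_pattern_node_shiftT (B := TA12)
      (dvd_mul_of_dvd_left (by norm_num : 6 ∣ 12) (n + 1)) ih.2 hTA12.2
    exact ⟨by rw [TkA, hm, ih.1, hTA12.1]; ring, hmem⟩

theorem add_minCost_pattern_le_node_shiftT {s : ℕ} (hs : 6 ∣ s) (A B : PTree ℕ) :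
    minCost pattern A + minCost pattern B ≤ minCost pattern (.node A (shiftT s B)) :=
  minCost_pattern_shiftT hs B ▸ add_minCost_le_minCost_node _ _ _

theorem le_minCost_pattern_TkB (n : ℕ) : 8 * (n + 1) ≤ minCost pattern (TkB n) := by
  have hTB12 : 8 ≤ minCost pattern TB12 := by
    have := add_minCost_pattern_le_node_shiftT (dvd_refl 6) Tb6 Tb6
    rwa [minCost_pattern_Tb6] at this
  induction n with
  | zero => exact hTB12
  | succ n ih =>
    have := add_minCost_pattern_le_node_shiftT
      (dvd_mul_of_dvd_left (by norm_num : 6 ∣ 12) (n + 1)) (TkB n) TB12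
    rw [TkB]
    omega

section MaxDiff
variable {X : Type}

theorem sub_le_maxDiff (f : X → ℕ) (T₁ T₂ : PTree X) :
    (pscore f T₂ : ℤ) - pscore f T₁ ≤ maxDiff T₁ T₂ := by
  refine le_csSup ⟨T₂.leaves.length, ?_⟩ ⟨f, rfl⟩
  rintro _ ⟨g, rfl⟩
  have := pscore_eq_minCost g T₂ ▸ minCost_lt_length_leaves g T₂
  omega

theorem maxDiff_le {T₁ T₂ : PTree X} {b : ℤ}
    (h : ∀ f : X → ℕ, (pscore f T₂ : ℤ) - pscore f T₁ ≤ b) : maxDiff T₁ T₂ ≤ b :=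
  csSup_le ⟨_, fun _ => 0, rfl⟩ (by rintro _ ⟨f, rfl⟩; exact h f)

end MaxDiff

theorem two_mul_succ_le_gap_TkA_TkB (n : ℕ) : 2 * (n + 1 : ℤ) ≤ gap (TkA n) (TkB n) := by
  have hAB : 4 * (n + 1 : ℤ) ≤ maxDiff (TkA n) (TkB n) := by
    have hdiff := sub_le_maxDiff pattern (TkA n) (TkB n)
    rw [pscore_eq_minCost, pscore_eq_minCost, (minCost_pattern_TkA n).1] at hdiff
    have := le_minCost_pattern_TkB n
    omega
  have hBA : maxDiff (TkB n) (TkA n) ≤ 2 * (n + 1 : ℤ) := maxDiff_le fun f => by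
    have := (scoreBound_TkA_TkB f n).1
    rw [pscore_eq_minCost, pscore_eq_minCost]
    omega
  exact (le_abs_self _).trans' (by linarith)

theorem gap_TkA_TkB_general (k : ℕ) :
    (k + 1 : ℤ) ≤ gap (TkA (k - 1)) (TkB (k - 1)) := by
  have := two_mul_succ_le_gap_TkA_TkB (k - 1)
  omega

/-- for every `k ≥ 1`, `gap(T^k_A, T^k_B) ≥ k + 1`.
(Recall `TkA (k-1) = T^k_A`.) -/
theorem gap_TkA_TkB (k : ℕ) (hk : 1 ≤ k) :
    (k + 1 : ℤ) ≤ gap (TkA (k - 1)) (TkB (k - 1)) :=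
  gap_TkA_TkB_general k

end MPDist
end

section
/- For the 32-taxon rooted binary trees T_AA and T_BB: the maximum over all characters f using at most 2 states of (l_f(T_BB) − l_f(T_AA)) equals 12, and the maximum over all characters f using at most 2 states of (l_f(T_AA) − l_f(T_BB)) equals 10. Consequently d^2_MP(T_AA, T_BB) = 12 and gap(T_AA, T_BB) ≥ 2 (where gap is taken over characters with at most 2 states). -/
namespace MPDist

/-! Auxiliary Sankoff / Pareto machinery, to be inserted before the theorem. -/

section Sankoff

lemma fin2_cases (c : Fin 2) : c = 0 ∨ c = 1 := by revert c; decide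

lemma fin2_cases' (a c : Fin 2) : a = c ∨ a = c + 1 := by revert a c; decide

/-- Sankoff dynamic programming: minimal number of changes of an extension
of `f` to `T` whose root is labelled `c`. -/
def sankoff (f : ℕ → Fin 2) : PTree ℕ → Fin 2 → ℕ
  | .leaf x => fun c => if f x = c then 0 else 1
  | .node l r => fun c =>
      min (sankoff f l c) (sankoff f l (c+1) + 1) +
      min (sankoff f r c) (sankoff f r (c+1) + 1)

lemma sankoff_le_changes {f : ℕ → Fin 2} {T : PTree ℕ} {g : ETree (Fin 2)}
    (h : IsExtension f T g) : sankoff f T g.root ≤ g.changes := by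
  induction h with
  | leaf x => simp [sankoff, ETree.root, ETree.changes]
  | @node l r gl gr c _ _ ihl ihr =>
    have key : ∀ (t : PTree ℕ) (e : ETree (Fin 2)), sankoff f t e.root ≤ e.changes →
        min (sankoff f t c) (sankoff f t (c+1) + 1) ≤
          (if e.root = c then 0 else 1) + e.changes := by
      intro t e ih
      by_cases he : e.root = c
      · rw [he] at ih
        rw [if_pos he]
        exact le_trans (min_le_left _ _) (by omega)
      · have hr : e.root = c + 1 := by
          rcases fin2_cases' e.root c with h1 | h1
          · exact absurd h1 he
          · exact h1
        rw [hr] at ih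
        rw [if_neg he]
        exact le_trans (min_le_right _ _) (by omega)
    have h1 := key l gl ihl
    have h2 := key r gr ihr
    show sankoff f (.node l r) c ≤ _
    simp only [sankoff, ETree.changes]
    omega

lemma exists_ext (f : ℕ → Fin 2) : ∀ (T : PTree ℕ) (c : Fin 2),
    ∃ g : ETree (Fin 2), IsExtension f T g ∧
      g.changes + (if g.root = c then 0 else 1) ≤ sankoff f T c := by
  intro T
  induction T with
  | leaf x =>
    intro c
    refine ⟨.leaf (f x), .leaf x, ?_⟩
    by_cases h : f x = c <;> simp [sankoff, ETree.root, ETree.changes, h]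
  | node l r ihl ihr =>
    intro c
    have get : ∀ (t : PTree ℕ),
        (∀ c', ∃ g, IsExtension f t g ∧
          g.changes + (if g.root = c' then 0 else 1) ≤ sankoff f t c') →
        ∃ g, IsExtension f t g ∧
          g.changes + (if g.root = c then 0 else 1) ≤
            min (sankoff f t c) (sankoff f t (c+1) + 1) := by
      intro t ih
      rcases le_total (sankoff f t c) (sankoff f t (c+1) + 1) with h | h
      · obtain ⟨g, hg, hb⟩ := ih c
        exact ⟨g, hg, by rw [min_eq_left h]; exact hb⟩
      · obtain ⟨g, hg, hb⟩ := ih (c+1)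
        refine ⟨g, hg, ?_⟩
        rw [min_eq_right h]
        by_cases he : g.root = c + 1
        · rw [if_pos he] at hb
          have hle : (if g.root = c then (0:ℕ) else 1) ≤ 1 := by split <;> omega
          omega
        · have hc : g.root = c := by
            rcases fin2_cases' g.root c with h1 | h1
            · exact h1
            · exact absurd h1 he
          rw [if_neg he] at hb
          rw [if_pos hc]
          omega
    obtain ⟨gl, hgl, hbl⟩ := get l ihl
    obtain ⟨gr, hgr, hbr⟩ := get r ihr
    refine ⟨.node c gl gr, .node c hgl hgr, ?_⟩
    have e : ETree.changes (ETree.node c gl gr) =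
        ((if gl.root = c then 0 else 1) + (if gr.root = c then 0 else 1)) +
          (gl.changes + gr.changes) := rfl
    have e2 : sankoff f (.node l r) c =
        min (sankoff f l c) (sankoff f l (c+1) + 1) +
          min (sankoff f r c) (sankoff f r (c+1) + 1) := rfl
    have e3 : ETree.root (ETree.node c gl gr) = c := rfl
    rw [e, e2, e3, if_pos rfl]
    omega

lemma pscore_eq (f : ℕ → Fin 2) (T : PTree ℕ) :
    pscore f T = min (sankoff f T 0) (sankoff f T 1) := by
  have hub : ∀ g : ETree (Fin 2), IsExtension f T g →
      min (sankoff f T 0) (sankoff f T 1) ≤ g.changes := by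
    intro g hg
    have h := sankoff_le_changes hg
    rcases fin2_cases g.root with h1 | h1 <;> rw [h1] at h
    · exact le_trans (min_le_left _ _) h
    · exact le_trans (min_le_right _ _) h
  have hmem : ∃ g, IsExtension f T g ∧
      g.changes = min (sankoff f T 0) (sankoff f T 1) := by
    rcases le_total (sankoff f T 0) (sankoff f T 1) with h | h
    · obtain ⟨g, hg, hb⟩ := exists_ext f T 0
      refine ⟨g, hg, le_antisymm ?_ (hub g hg)⟩
      rw [min_eq_left h]
      omega
    · obtain ⟨g, hg, hb⟩ := exists_ext f T 1
      refine ⟨g, hg, le_antisymm ?_ (hub g hg)⟩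
      rw [min_eq_right h]
      omega
  obtain ⟨g, hg, hc⟩ := hmem
  apply le_antisymm
  · exact Nat.sInf_le ⟨g, hg, hc⟩
  · exact le_csInf ⟨g.changes, g, hg, rfl⟩ (by rintro b ⟨g', hg', rfl⟩; exact hub g' hg')

lemma sankoff_congr {f f' : ℕ → Fin 2} : ∀ (T : PTree ℕ),
    (∀ x ∈ T.leaves, f x = f' x) → ∀ c, sankoff f T c = sankoff f' T c := by
  intro T
  induction T with
  | leaf x => intro h c; simp [sankoff, h x (by simp [PTree.leaves])]
  | node l r ihl ihr =>
    intro h c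
    have hl := ihl (fun x hx => h x (by simp [PTree.leaves, List.mem_append, hx]))
    have hr := ihr (fun x hx => h x (by simp [PTree.leaves, List.mem_append, hx]))
    simp [sankoff, hl, hr]

lemma sankoff_shift (f : ℕ → Fin 2) (s : ℕ) : ∀ (T : PTree ℕ) (c : Fin 2),
    sankoff f (shiftT s T) c = sankoff (fun x => f (x + s)) T c := by
  intro T
  induction T with
  | leaf x => intro c; rfl
  | node l r ihl ihr =>
    intro c
    show sankoff f (.node (shiftT s l) (shiftT s r)) c = _
    simp [sankoff, ihl, ihr]

end Sankoff

section Pareto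

/-- Combination rule for the pair of Sankoff values at a node. -/
def comb2 (a b : ℕ × ℕ) : ℕ × ℕ :=
  (min a.1 (a.2+1) + min b.1 (b.2+1), min a.2 (a.1+1) + min b.2 (b.1+1))

/-- `Dom p t`: the pair-of-pairs `p` gives at least as large a score gap as `t`. -/
def Dom (p t : (ℕ × ℕ) × (ℕ × ℕ)) : Prop :=
  p.1.1 ≤ t.1.1 ∧ p.1.2 ≤ t.1.2 ∧ t.2.1 ≤ p.2.1 ∧ t.2.2 ≤ p.2.2

instance (p t : (ℕ × ℕ) × (ℕ × ℕ)) : Decidable (Dom p t) := by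
  unfold Dom; infer_instance

/-- Sankoff value pair of a tree. -/
def sv (f : ℕ → Fin 2) (T : PTree ℕ) : ℕ × ℕ := (sankoff f T 0, sankoff f T 1)

lemma sv_node (f : ℕ → Fin 2) (l r : PTree ℕ) :
    sv f (.node l r) = comb2 (sv f l) (sv f r) := rfl

lemma comb2_mono {a a' b b' : ℕ × ℕ} (h1 : a.1 ≤ a'.1) (h2 : a.2 ≤ a'.2)
    (h3 : b.1 ≤ b'.1) (h4 : b.2 ≤ b'.2) :
    (comb2 a b).1 ≤ (comb2 a' b').1 ∧ (comb2 a b).2 ≤ (comb2 a' b').2 := by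
  unfold comb2; simp only []
  constructor <;>
    exact Nat.add_le_add (min_le_min (by omega) (by omega)) (min_le_min (by omega) (by omega))

/-- The invariant: for every character, some tuple in `P` dominates the pair of
Sankoff vectors of `(T1, T2)`. -/
def Rel (P : List ((ℕ × ℕ) × (ℕ × ℕ))) (T1 T2 : PTree ℕ) : Prop :=
  ∀ f : ℕ → Fin 2, ∃ p ∈ P, Dom p (sv f T1, sv f T2)

lemma rel_lift {P Q : List ((ℕ × ℕ) × (ℕ × ℕ))} {T1 T2 : PTree ℕ} (s : ℕ)
    (h : Rel P T1 T2)
    (hPQ : ∀ p ∈ P, ∀ q ∈ P, ∃ r ∈ Q, Dom r (comb2 p.1 q.1, comb2 p.2 q.2)) :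
    Rel Q (.node T1 (shiftT s T1)) (.node T2 (shiftT s T2)) := by
  intro f
  obtain ⟨p, hp, hdp⟩ := h f
  obtain ⟨q, hq, hdq⟩ := h (fun x => f (x + s))
  obtain ⟨r, hr, hdr⟩ := hPQ p hp q hq
  refine ⟨r, hr, ?_⟩
  have e1 : sv f (shiftT s T1) = sv (fun x => f (x + s)) T1 := by
    simp [sv, sankoff_shift]
  have e2 : sv f (shiftT s T2) = sv (fun x => f (x + s)) T2 := by
    simp [sv, sankoff_shift]
  obtain ⟨d1, d2, d3, d4⟩ := hdp
  obtain ⟨g1, g2, g3, g4⟩ := hdq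
  obtain ⟨r1, r2, r3, r4⟩ := hdr
  rw [sv_node, sv_node, e1, e2] at *
  have m1 := comb2_mono d1 d2 g1 g2
  have m2 := comb2_mono d3 d4 g3 g4
  exact ⟨r1.trans m1.1, r2.trans m1.2, m2.1.trans r3, m2.2.trans r4⟩

end Pareto

section Data

def P8L : List ((ℕ × ℕ) × (ℕ × ℕ)) :=
  [((0,2),(0,2)), ((1,1),(4,4)), ((1,2),(3,5)), ((2,0),(2,0)), ((2,1),(5,3))]

def P16L : List ((ℕ × ℕ) × (ℕ × ℕ)) :=
  [((0,2),(0,2)), ((1,1),(1,1)), ((1,2),(4,5)), ((2,0),(2,0)), ((2,1),(5,4)), ((2,2),(8,8))]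

def P32L : List ((ℕ × ℕ) × (ℕ × ℕ)) :=
  [((0,2),(0,2)), ((1,1),(1,1)), ((1,2),(1,2)), ((1,3),(4,6)), ((2,0),(2,0)), ((2,1),(2,1)),
   ((2,2),(5,5)), ((2,3),(8,9)), ((2,4),(8,10)), ((3,1),(6,4)), ((3,2),(9,8)), ((3,3),(9,9)),
   ((3,4),(12,13)), ((4,2),(10,8)), ((4,3),(13,12)), ((4,4),(16,16))]

def Q8L : List ((ℕ × ℕ) × (ℕ × ℕ)) :=
  [((0,2),(0,2)), ((1,1),(3,4)), ((1,1),(4,3)), ((2,0),(2,0)), ((2,2),(4,4))]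

def Q16L : List ((ℕ × ℕ) × (ℕ × ℕ)) :=
  [((0,2),(0,2)), ((1,1),(1,1)), ((1,2),(3,5)), ((1,2),(4,4)), ((2,0),(2,0)), ((2,1),(4,4)),
   ((2,1),(5,3)), ((2,2),(6,8)), ((2,2),(7,7)), ((2,2),(8,6)), ((3,3),(7,8)), ((3,3),(8,7)),
   ((4,4),(8,8))]

def Q32L : List ((ℕ × ℕ) × (ℕ × ℕ)) :=
  [((0,2),(0,2)), ((1,1),(1,1)), ((1,2),(1,2)), ((1,3),(4,5)), ((2,0),(2,0)), ((2,1),(2,1)),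
   ((2,2),(4,5)), ((2,2),(5,4)), ((2,3),(7,8)), ((2,4),(8,8)), ((3,1),(5,4)), ((3,2),(8,7)),
   ((3,3),(8,8)), ((3,4),(11,11)), ((4,2),(8,8)), ((4,3),(11,11)), ((4,4),(14,14)),
   ((5,5),(14,15)), ((5,5),(15,14)), ((6,6),(14,16)), ((6,6),(15,15)), ((6,6),(16,14)),
   ((7,7),(15,16)), ((7,7),(16,15)), ((8,8),(16,16))]

def pad8 (v0 v1 v2 v3 v4 v5 v6 v7 : Fin 2) : ℕ → Fin 2 := fun n =>
  if n = 0 then v0 else if n = 1 then v1 else if n = 2 then v2 else if n = 3 then v3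
  else if n = 4 then v4 else if n = 5 then v5 else if n = 6 then v6 else v7

lemma base_max : ∀ v0 v1 v2 v3 v4 v5 v6 v7 : Fin 2,
    ∃ p ∈ P8L, Dom p (sv (pad8 v0 v1 v2 v3 v4 v5 v6 v7) Ta8,
                      sv (pad8 v0 v1 v2 v3 v4 v5 v6 v7) Tb8) := by decide

lemma base_min : ∀ v0 v1 v2 v3 v4 v5 v6 v7 : Fin 2,
    ∃ p ∈ Q8L, Dom p (sv (pad8 v0 v1 v2 v3 v4 v5 v6 v7) Tb8,
                      sv (pad8 v0 v1 v2 v3 v4 v5 v6 v7) Ta8) := by decide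

lemma pad8_leaves_a (f : ℕ → Fin 2) :
    ∀ x ∈ Ta8.leaves, pad8 (f 0) (f 1) (f 2) (f 3) (f 4) (f 5) (f 6) (f 7) x = f x := by
  intro x hx
  have hx' : x ∈ [4, 5, 3, 2, 0, 7, 1, 6] := hx
  fin_cases hx' <;> rfl

lemma pad8_leaves_b (f : ℕ → Fin 2) :
    ∀ x ∈ Tb8.leaves, pad8 (f 0) (f 1) (f 2) (f 3) (f 4) (f 5) (f 6) (f 7) x = f x := by
  intro x hx
  have hx' : x ∈ [6, 3, 1, 5, 2, 7, 0, 4] := hx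
  fin_cases hx' <;> rfl

lemma rel8_max : Rel P8L Ta8 Tb8 := by
  intro f
  have h := base_max (f 0) (f 1) (f 2) (f 3) (f 4) (f 5) (f 6) (f 7)
  have ea : sv (pad8 (f 0) (f 1) (f 2) (f 3) (f 4) (f 5) (f 6) (f 7)) Ta8 = sv f Ta8 := by
    simp [sv, sankoff_congr Ta8 (pad8_leaves_a f)]
  have eb : sv (pad8 (f 0) (f 1) (f 2) (f 3) (f 4) (f 5) (f 6) (f 7)) Tb8 = sv f Tb8 := by
    simp [sv, sankoff_congr Tb8 (pad8_leaves_b f)]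
  rwa [ea, eb] at h

lemma rel8_min : Rel Q8L Tb8 Ta8 := by
  intro f
  have h := base_min (f 0) (f 1) (f 2) (f 3) (f 4) (f 5) (f 6) (f 7)
  have ea : sv (pad8 (f 0) (f 1) (f 2) (f 3) (f 4) (f 5) (f 6) (f 7)) Ta8 = sv f Ta8 := by
    simp [sv, sankoff_congr Ta8 (pad8_leaves_a f)]
  have eb : sv (pad8 (f 0) (f 1) (f 2) (f 3) (f 4) (f 5) (f 6) (f 7)) Tb8 = sv f Tb8 := by
    simp [sv, sankoff_congr Tb8 (pad8_leaves_b f)]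
  rwa [ea, eb] at h

lemma rel16_max : Rel P16L TA16 TB16 := rel_lift 8 rel8_max (by decide)
lemma rel32_max : Rel P32L TAA TBB := rel_lift 16 rel16_max (by decide)
lemma rel16_min : Rel Q16L TB16 TA16 := rel_lift 8 rel8_min (by decide)
lemma rel32_min : Rel Q32L TBB TAA := rel_lift 16 rel16_min (by decide)

lemma ub_max (f : ℕ → Fin 2) : pscore f TBB ≤ pscore f TAA + 12 := by
  obtain ⟨p, hp, h1, h2, h3, h4⟩ := rel32_max f
  have hb : ∀ p ∈ P32L, min p.2.1 p.2.2 ≤ min p.1.1 p.1.2 + 12 := by decide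
  have hbp := hb p hp
  rw [pscore_eq, pscore_eq]
  simp only [sv] at h1 h2 h3 h4
  omega

lemma ub_min (f : ℕ → Fin 2) : pscore f TAA ≤ pscore f TBB + 10 := by
  obtain ⟨p, hp, h1, h2, h3, h4⟩ := rel32_min f
  have hb : ∀ p ∈ Q32L, min p.2.1 p.2.2 ≤ min p.1.1 p.1.2 + 10 := by decide
  have hbp := hb p hp
  rw [pscore_eq, pscore_eq]
  simp only [sv] at h1 h2 h3 h4
  omega

def w12 : ℕ → Fin 2 := fun n => if 2 ≤ n % 8 ∧ n % 8 ≤ 5 then 1 else 0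

def w10 : ℕ → Fin 2 := fun n => if n % 16 ∈ [1,3,5,6,9,10,11,13,14] then 1 else 0

lemma w12A : pscore w12 TAA = 4 := by rw [pscore_eq]; decide
lemma w12B : pscore w12 TBB = 16 := by rw [pscore_eq]; decide
lemma w10A : pscore w10 TAA = 14 := by rw [pscore_eq]; decide
lemma w10B : pscore w10 TBB = 4 := by rw [pscore_eq]; decide

end Data

/-- for the 32-taxon trees `T_AA` and `T_BB`, over characters with
at most 2 states: `max_f (l_f(T_BB) − l_f(T_AA)) = 12`,
`max_f (l_f(T_AA) − l_f(T_BB)) = 10`, hence `d^2_MP(T_AA,T_BB) = 12` and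
`gap(T_AA,T_BB) ≥ 2`. -/
theorem TAA_TBB_gap :
    maxDiffk 2 TAA TBB = 12 ∧
    maxDiffk 2 TBB TAA = 10 ∧
    dMPk 2 TAA TBB = 12 ∧
    2 ≤ gapk 2 TAA TBB := by
  have hmax : maxDiffk 2 TAA TBB = 12 := by
    apply IsGreatest.csSup_eq
    constructor
    · exact ⟨w12, by rw [w12A, w12B]; norm_num⟩
    · rintro d ⟨f, rfl⟩
      have := ub_max f
      omega
  have hmin : maxDiffk 2 TBB TAA = 10 := by
    apply IsGreatest.csSup_eq
    constructor
    · exact ⟨w10, by rw [w10A, w10B]; norm_num⟩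
    · rintro d ⟨f, rfl⟩
      have := ub_min f
      omega
  have hd : dMPk 2 TAA TBB = 12 := by
    apply IsGreatest.csSup_eq
    constructor
    · exact ⟨w12, by rw [w12A, w12B]; rfl⟩
    · rintro k ⟨f, rfl⟩
      have h1 := ub_max f
      have h2 := ub_min f
      omega
  refine ⟨hmax, hmin, hd, ?_⟩
  unfold gapk
  rw [hmax, hmin]
  norm_num


end MPDist
end
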